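/- arXiv:1709.03098 — 10 statements merged into one kernel-verified Lean document; each statement's English description precedes it below -/
import Mathlib

section
/- Let (M, d) be a complete metric space and f : M → M a map. Suppose there exists a function β : [0, ∞) → [0, 1) satisfying the Geraghty condition (β(tₙ) → 1 implies tₙ → 0) such that d(f(x), f(y)) ≤ β(d(x, y))·d(x, y) for all x, y ∈ M. Then f has a unique fixed point z ∈ M, and for each x ∈ M the sequence of iterates {fⁿ(x)} converges to z. -/
open Filter Topology

theorem geraghty_aux {M : Type*} [MetricSpace M] [CompleteSpace M]
    (f : M → M) (β : ℝ → ℝ)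
    (hβ_range : ∀ t : ℝ, 0 ≤ t → 0 ≤ β t ∧ β t < 1)
    (hβ_geraghty : ∀ t : ℕ → ℝ, (∀ n, 0 ≤ t n) →
      Tendsto (fun n => β (t n)) atTop (𝓝 1) → Tendsto t atTop (𝓝 0))
    (hf : ∀ x y : M, dist (f x) (f y) ≤ β (dist x y) * dist x y)
    (x : M) : ∃ z : M, f z = z ∧ Tendsto (fun n => f^[n] x) atTop (𝓝 z) := by
  set u : ℕ → M := fun n => f^[n] x with hu
  set a : ℕ → ℝ := fun n => dist (u n) (u (n + 1)) with ha
  have ha0 : ∀ n, 0 ≤ a n := fun n => dist_nonneg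
  have he : ∀ n, u (n + 1) = f (u n) := fun n => Function.iterate_succ_apply' f n x
  have hstep : ∀ n, a (n + 1) ≤ β (a n) * a n := by
    intro n
    have key : a (n + 1) = dist (f (u n)) (f (u (n + 1))) := by
      show dist (u (n + 1)) (u (n + 1 + 1)) = _
      rw [← he (n + 1), ← he n]
    rw [key]
    exact hf _ _
  have hanti : Antitone a := by
    apply antitone_nat_of_succ_le
    intro n
    have hb := hβ_range (a n) (ha0 n)
    calc a (n + 1) ≤ β (a n) * a n := hstep n
      _ ≤ 1 * a n := mul_le_mul_of_nonneg_right hb.2.le (ha0 n)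
      _ = a n := one_mul _
  have hbdd : BddBelow (Set.range a) := ⟨0, by rintro y ⟨n, rfl⟩; exact ha0 n⟩
  have ha_lim : Tendsto a atTop (𝓝 (⨅ n, a n)) := tendsto_atTop_ciInf hanti hbdd
  set L := ⨅ n, a n with hL
  have hL0 : 0 ≤ L := le_ciInf ha0
  have hLle : ∀ n, L ≤ a n := fun n => ciInf_le hbdd n
  have haz : Tendsto a atTop (𝓝 0) := by
    rcases eq_or_lt_of_le hL0 with h0 | hL'
    · rw [← h0] at ha_lim; exact ha_lim
    · have hlow : ∀ n, a (n + 1) / a n ≤ β (a n) := by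
        intro n
        rw [div_le_iff₀ (lt_of_lt_of_le hL' (hLle n))]
        exact hstep n
      have hshift : Tendsto (fun n => a (n + 1)) atTop (𝓝 L) :=
        ha_lim.comp (tendsto_add_atTop_nat 1)
      have hratio : Tendsto (fun n => a (n + 1) / a n) atTop (𝓝 1) := by
        have := hshift.div ha_lim (ne_of_gt hL')
        rwa [div_self (ne_of_gt hL')] at this
      have hb1 : Tendsto (fun n => β (a n)) atTop (𝓝 1) :=
        tendsto_of_tendsto_of_tendsto_of_le_of_le hratio tendsto_const_nhds
          hlow (fun n => (hβ_range _ (ha0 n)).2.le)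
      have := hβ_geraghty a ha0 hb1
      exact this
  have hcau : CauchySeq u := by
    rw [Metric.cauchySeq_iff]
    by_contra hcon
    push_neg at hcon
    obtain ⟨ε, hε, hcon⟩ := hcon
    choose m hm n hn hd using hcon
    set d : ℕ → ℝ := fun k => dist (u (m k)) (u (n k)) with hdd
    have hd0 : ∀ k, 0 ≤ d k := fun k => dist_nonneg
    have hβd : ∀ k, 1 - (a (m k) + a (n k)) / ε ≤ β (d k) := by
      intro k
      have htri : d k ≤ a (m k) + dist (u (m k + 1)) (u (n k + 1)) + a (n k) := by
        have := dist_triangle4 (u (m k)) (u (m k + 1)) (u (n k + 1)) (u (n k))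
        have h2 : dist (u (n k + 1)) (u (n k)) = a (n k) := dist_comm _ _
        simpa [h2] using this
      have hmid : dist (u (m k + 1)) (u (n k + 1)) ≤ β (d k) * d k := by
        rw [he (m k), he (n k)]
        exact hf _ _
      have hb := hβ_range (d k) (hd0 k)
      have h1 : (1 - β (d k)) * ε ≤ (1 - β (d k)) * d k :=
        mul_le_mul_of_nonneg_left (hd k) (by linarith [hb.2])
      have h2 : (1 - β (d k)) * d k ≤ a (m k) + a (n k) := by nlinarith
      have h3 : 1 - β (d k) ≤ (a (m k) + a (n k)) / ε :=
        (le_div_iff₀ hε).mpr (by linarith)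
      linarith
    have hs0 : Tendsto (fun k => a (m k) + a (n k)) atTop (𝓝 0) := by
      have hub : ∀ k, a (m k) + a (n k) ≤ a k + a k := fun k =>
        add_le_add (hanti (hm k)) (hanti (hn k))
      have hlb : ∀ k, 0 ≤ a (m k) + a (n k) := fun k =>
        add_nonneg (ha0 _) (ha0 _)
      have h2 : Tendsto (fun k => a k + a k) atTop (𝓝 (0 + 0)) := haz.add haz
      rw [add_zero] at h2
      exact tendsto_of_tendsto_of_tendsto_of_le_of_le tendsto_const_nhds h2 hlb hub
    have hlowlim : Tendsto (fun k => 1 - (a (m k) + a (n k)) / ε) atTop (𝓝 1) := by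
      have h1 : Tendsto (fun _ : ℕ => (1 : ℝ)) atTop (𝓝 1) := tendsto_const_nhds
      have := h1.sub (hs0.div_const ε)
      simpa using this
    have hβd1 : Tendsto (fun k => β (d k)) atTop (𝓝 1) :=
      tendsto_of_tendsto_of_tendsto_of_le_of_le hlowlim tendsto_const_nhds
        hβd (fun k => (hβ_range _ (hd0 k)).2.le)
    have hdz := hβ_geraghty d hd0 hβd1
    have : ∀ᶠ k in atTop, d k < ε := hdz.eventually_lt_const hε
    obtain ⟨k, hk⟩ := this.exists
    exact absurd hk (not_lt.mpr (hd k))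
  obtain ⟨z, hz⟩ := cauchySeq_tendsto_of_complete hcau
  have hlip : LipschitzWith 1 f := by
    apply LipschitzWith.of_dist_le_mul
    intro p q
    have hb := hβ_range (dist p q) dist_nonneg
    have := hf p q
    have hd : (0 : ℝ) ≤ dist p q := dist_nonneg
    push_cast
    nlinarith
  have hfz : Tendsto (fun k => f (u k)) atTop (𝓝 (f z)) :=
    (hlip.continuous.tendsto z).comp hz
  have hshift : Tendsto (fun k => u (k + 1)) atTop (𝓝 z) :=
    hz.comp (tendsto_add_atTop_nat 1)
  have heq : (fun k => f (u k)) = fun k => u (k + 1) := by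
    funext k; rw [he k]
  rw [heq] at hfz
  exact ⟨z, tendsto_nhds_unique hfz hshift, hz⟩

/-- Geraghty's fixed point theorem: if `β : [0,∞) → [0,1)` satisfies
`β(tₙ) → 1 ⇒ tₙ → 0` and `d(f x, f y) ≤ β(d(x,y))·d(x,y)` for all `x, y`,
then `f` has a unique fixed point `z`, and the iterates `fⁿ(x)` converge to `z`
for every `x`. -/
theorem geraghty_fixed_point {M : Type*} [MetricSpace M] [CompleteSpace M] [Nonempty M]
    (f : M → M) (β : ℝ → ℝ)
    (hβ_range : ∀ t : ℝ, 0 ≤ t → 0 ≤ β t ∧ β t < 1)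
    (hβ_geraghty : ∀ t : ℕ → ℝ, (∀ n, 0 ≤ t n) →
      Tendsto (fun n => β (t n)) atTop (𝓝 1) → Tendsto t atTop (𝓝 0))
    (hf : ∀ x y : M, dist (f x) (f y) ≤ β (dist x y) * dist x y) :
    ∃ z : M, f z = z ∧ (∀ y : M, f y = y → y = z) ∧
      ∀ x : M, Tendsto (fun n => f^[n] x) atTop (𝓝 z) := by
  obtain ⟨z, hz, -⟩ := geraghty_aux f β hβ_range hβ_geraghty hf (Classical.arbitrary M)
  have huniq : ∀ y : M, f y = y → y = z := by
    intro y hy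
    by_contra hne
    have hd : 0 < dist y z := dist_pos.mpr hne
    have := hf y z
    rw [hy, hz] at this
    have hb := hβ_range (dist y z) dist_nonneg
    nlinarith
  refine ⟨z, hz, huniq, fun x => ?_⟩
  obtain ⟨w, hw1, hw2⟩ := geraghty_aux f β hβ_range hβ_geraghty hf x
  rwa [huniq w hw1] at hw2
end

section
/- Let (M, ⪯) be a partially ordered set equipped with a metric d such that (M, d) is a complete metric space. Let f : M → M be an increasing map (x ⪯ y implies f(x) ⪯ f(y)) such that there exists x₀ ∈ M with x₀ ⪯ f(x₀). Suppose there exists β : [0, ∞) → [0, 1) with the Geraghty condition (β(tₙ) → 1 implies tₙ → 0) such that d(f(x), f(y)) ≤ β(d(x, y))·d(x, y) for all x, y ∈ M with y ⪯ x. Assume that either f is continuous, or M has the property that whenever an increasing sequence {xₙ} converges to x in M, then xₙ ⪯ x for all n. Assume moreover that for each x, y ∈ M there exists z ∈ M which is comparable (in the order ⪯) to both x and y. Then f has a unique fixed point. -/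
open Filter Topology

/-- Amini-Harandi and Emami's fixed point theorem in partially ordered complete
metric spaces: if `f` is increasing, `x₀ ⪯ f x₀` for some `x₀`, the Geraghty-type
contraction holds for comparable elements, `f` is continuous or the space has the
sequential order property, and every two elements have a common comparable element,
then `f` has a unique fixed point. -/
theorem ordered_geraghty_fixed_point {M : Type*} [PartialOrder M] [MetricSpace M]
    [CompleteSpace M]
    (f : M → M) (hf_mono : ∀ x y : M, x ≤ y → f x ≤ f y)
    (x₀ : M) (hx₀ : x₀ ≤ f x₀)
    (β : ℝ → ℝ)
    (hβ_range : ∀ t : ℝ, 0 ≤ t → 0 ≤ β t ∧ β t < 1)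
    (hβ_geraghty : ∀ t : ℕ → ℝ, (∀ n, 0 ≤ t n) →
      Tendsto (fun n => β (t n)) atTop (𝓝 1) → Tendsto t atTop (𝓝 0))
    (hf_contr : ∀ x y : M, y ≤ x → dist (f x) (f y) ≤ β (dist x y) * dist x y)
    (hcont_or_seq : Continuous f ∨
      ∀ (x : ℕ → M) (l : M), (∀ n, x n ≤ x (n + 1)) → Tendsto x atTop (𝓝 l) →
        ∀ n, x n ≤ l)
    (hcomp : ∀ x y : M, ∃ z : M, (z ≤ x ∨ x ≤ z) ∧ (z ≤ y ∨ y ≤ z)) :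
    ∃! z : M, f z = z := by
  -- Key lemma: any nonnegative sequence with a(n+1) ≤ β(a n)·a n tends to 0.
  have key : ∀ a : ℕ → ℝ, (∀ n, 0 ≤ a n) → (∀ n, a (n+1) ≤ β (a n) * a n) →
      Tendsto a atTop (𝓝 0) := by
    intro a ha hrec
    have hanti : ∀ n, a (n+1) ≤ a n := fun n => (hrec n).trans
      (by nlinarith [(hβ_range (a n) (ha n)).1, (hβ_range (a n) (ha n)).2, ha n])
    have hAnti : Antitone a := antitone_nat_of_succ_le hanti
    have hbdd : BddBelow (Set.range a) := ⟨0, by rintro x ⟨n, rfl⟩; exact ha n⟩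
    have hlim : Tendsto a atTop (𝓝 (⨅ n, a n)) := tendsto_atTop_ciInf hAnti hbdd
    have hL0 : 0 ≤ ⨅ n, a n := le_ciInf ha
    rcases eq_or_lt_of_le hL0 with h | h
    · rwa [← h] at hlim
    · exfalso
      have hpos : ∀ n, 0 < a n := fun n => h.trans_le (ciInf_le hbdd n)
      have hβlim : Tendsto (fun n => β (a n)) atTop (𝓝 1) := by
        have hlow : ∀ n, a (n+1) / a n ≤ β (a n) := fun n => (div_le_iff₀ (hpos n)).2 (hrec n)
        have hhigh : ∀ n, β (a n) ≤ 1 := fun n => (hβ_range _ (ha n)).2.le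
        have h1 : Tendsto (fun n => a (n+1) / a n) atTop (𝓝 ((⨅ n, a n) / (⨅ n, a n))) :=
          Tendsto.div (hlim.comp (tendsto_add_atTop_nat 1)) hlim h.ne'
        rw [div_self h.ne'] at h1
        exact tendsto_of_tendsto_of_tendsto_of_le_of_le h1 tendsto_const_nhds hlow hhigh
      have h0 := hβ_geraghty a ha hβlim
      have := tendsto_nhds_unique hlim h0
      linarith
  -- The Picard iterates.
  set x : ℕ → M := fun n => f^[n] x₀ with hx
  have hstep : ∀ n, x (n+1) = f (x n) := fun n => Function.iterate_succ_apply' f n x₀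
  have hincr : ∀ n, x n ≤ x (n+1) := by
    intro n
    induction n with
    | zero => exact hx₀
    | succ k ih => rw [hstep, hstep]; exact hf_mono _ _ ih
  have hmono : Monotone x := monotone_nat_of_le_succ hincr
  -- successive distances
  set d : ℕ → ℝ := fun n => dist (x (n+1)) (x n) with hd
  have hdrec : ∀ n, d (n+1) ≤ β (d n) * d n := by
    intro n
    have := hf_contr (x (n+1)) (x n) (hincr n)
    simpa [hd, hstep] using this
  have hdnn : ∀ n, 0 ≤ d n := fun n => dist_nonneg
  have hdlim : Tendsto d atTop (𝓝 0) := key d hdnn hdrec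
  have hdanti : Antitone d := antitone_nat_of_succ_le fun n => (hdrec n).trans
    (by nlinarith [(hβ_range (d n) (hdnn n)).1, (hβ_range (d n) (hdnn n)).2, hdnn n])
  -- Cauchy
  have hcauchy : CauchySeq x := by
    by_contra hC
    rw [Metric.cauchySeq_iff] at hC
    push_neg at hC
    obtain ⟨ε, hε, H⟩ := hC
    -- for every k there are n ≥ k and m > n with ε ≤ dist (x m) (x n)
    have Hk : ∀ k, ∃ n, k ≤ n ∧ ∃ m, n < m ∧ ε ≤ dist (x m) (x n) := by
      intro k
      obtain ⟨p, hp, q, hq, hpq⟩ := H k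
      rcases lt_trichotomy p q with h | h | h
      · exact ⟨p, hp, q, h, by rwa [dist_comm]⟩
      · exact absurd hpq (by simp [h]; linarith)
      · exact ⟨q, hq, p, h, hpq⟩
    choose n hnk Hm using Hk
    set m : ℕ → ℕ := fun k => Nat.find (Hm k) with hmdef
    have hm1 : ∀ k, n k < m k ∧ ε ≤ dist (x (m k)) (x (n k)) := fun k => Nat.find_spec (Hm k)
    have hmin : ∀ k j, j < m k → ¬(n k < j ∧ ε ≤ dist (x j) (x (n k))) :=
      fun k j hj => Nat.find_min (Hm k) hj
    set t : ℕ → ℝ := fun k => dist (x (m k)) (x (n k)) with ht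
    have htε : ∀ k, ε ≤ t k := fun k => (hm1 k).2
    -- eventual upper bound
    have hub : ∀ᶠ k in atTop, t k ≤ ε + d k := by
      filter_upwards [hdlim.eventually (gt_mem_nhds hε)] with k hk
      have hnm := (hm1 k).1
      have hne : m k ≠ n k + 1 := by
        intro hcon
        have : t k = d (n k) := by rw [ht]; simp [hcon, hd]
        have : ε ≤ d (n k) := this ▸ htε k
        have := hdanti (hnk k)
        linarith
      have h2 : n k + 1 < m k := lt_of_le_of_ne hnm (Ne.symm hne)
      obtain ⟨j, hjj⟩ : ∃ j, m k = j + 1 := ⟨m k - 1, by omega⟩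
      have hj : j < m k := by omega
      have hjn : n k < j := by omega
      have hlt : dist (x j) (x (n k)) < ε := by
        by_contra hge
        exact hmin k j hj ⟨hjn, le_of_not_gt hge⟩
      have hdm : dist (x (m k)) (x j) = d j := by rw [hjj]
      have hdk : d j ≤ d k := hdanti ((hnk k).trans hjn.le)
      calc t k ≤ dist (x (m k)) (x j) + dist (x j) (x (n k)) :=
            dist_triangle _ _ _
        _ ≤ d k + ε := by rw [hdm]; linarith
        _ = ε + d k := by ring
    have htlim : Tendsto t atTop (𝓝 ε) := by
      have h1 : Tendsto (fun k => ε + d k) atTop (𝓝 (ε + 0)) :=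
        tendsto_const_nhds.add hdlim
      rw [add_zero] at h1
      exact tendsto_of_tendsto_of_tendsto_of_le_of_le' tendsto_const_nhds h1
        (Eventually.of_forall htε) hub
    -- contraction estimate
    have hcon : ∀ k, t k ≤ β (t k) * t k + 2 * d k := by
      intro k
      have hxy : x (n k) ≤ x (m k) := hmono (hm1 k).1.le
      have h1 : dist (x (m k + 1)) (x (n k + 1)) ≤ β (t k) * t k := by
        have := hf_contr (x (m k)) (x (n k)) hxy
        simpa [hstep, ht] using this
      have hdm : d (m k) ≤ d k := hdanti ((hnk k).trans (hm1 k).1.le)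
      have hdn : d (n k) ≤ d k := hdanti (hnk k)
      have h2 : t k ≤ dist (x (m k)) (x (m k + 1)) + dist (x (m k + 1)) (x (n k + 1))
          + dist (x (n k + 1)) (x (n k)) := dist_triangle4 _ _ _ _
      have e1 : dist (x (m k)) (x (m k + 1)) = d (m k) := dist_comm _ _
      have e2 : dist (x (n k + 1)) (x (n k)) = d (n k) := rfl
      rw [e1, e2] at h2
      linarith
    have hβlow : ∀ k, 1 - 2 * d k / ε ≤ β (t k) := by
      intro k
      have h1 := hcon k
      have h2 := htε k
      have h3 := hdnn k
      have h4 : 0 < t k := lt_of_lt_of_le hε h2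
      have h5 : 2 * d k / ε ≥ 2 * d k / t k := by
        apply div_le_div_of_nonneg_left (by linarith) hε h2
      have h6 : 1 - 2 * d k / t k ≤ β (t k) := by
        rw [sub_le_iff_le_add, ← sub_le_iff_le_add', le_div_iff₀ h4]
        nlinarith
      linarith
    have hβlim : Tendsto (fun k => β (t k)) atTop (𝓝 1) := by
      have h1 : Tendsto (fun k => 1 - 2 * d k / ε) atTop (𝓝 (1 - 2 * 0 / ε)) := by
        exact tendsto_const_nhds.sub ((hdlim.const_mul 2).div_const ε)
      rw [mul_zero, zero_div, sub_zero] at h1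
      exact tendsto_of_tendsto_of_tendsto_of_le_of_le h1 tendsto_const_nhds hβlow
        (fun k => (hβ_range _ dist_nonneg).2.le)
    have h0 := hβ_geraghty t (fun k => dist_nonneg) hβlim
    have := tendsto_nhds_unique htlim h0
    linarith
  -- limit and fixed point
  obtain ⟨z, hz⟩ := cauchySeq_tendsto_of_complete hcauchy
  have hfz : f z = z := by
    rcases hcont_or_seq with hcont | hseq
    · have h1 : Tendsto (fun n => x (n+1)) atTop (𝓝 z) := hz.comp (tendsto_add_atTop_nat 1)
      have h2 : Tendsto (fun n => f (x n)) atTop (𝓝 (f z)) := (hcont.tendsto z).comp hz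
      have h3 : (fun n => x (n+1)) = fun n => f (x n) := funext hstep
      rw [h3] at h1
      exact tendsto_nhds_unique h2 h1
    · have hle : ∀ n, x n ≤ z := hseq x z hincr hz
      have hdz : Tendsto (fun n => dist (x n) z) atTop (𝓝 0) :=
        tendsto_iff_dist_tendsto_zero.1 hz
      have h1 : ∀ n, dist (x (n+1)) (f z) ≤ dist z (x n) := by
        intro n
        have h2 := hf_contr z (x n) (hle n)
        have h3 := (hβ_range (dist z (x n)) dist_nonneg)
        have h4 : dist (f z) (f (x n)) ≤ dist z (x n) := by nlinarith [dist_nonneg (x := z) (y := x n)]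
        rw [hstep, dist_comm]
        exact h4
      have h5 : Tendsto (fun n => dist (x (n+1)) (f z)) atTop (𝓝 0) := by
        apply squeeze_zero (fun n => dist_nonneg) h1
        simpa [dist_comm] using hdz
      have h6 : Tendsto (fun n => x (n+1)) atTop (𝓝 (f z)) :=
        tendsto_iff_dist_tendsto_zero.2 h5
      have h7 : Tendsto (fun n => x (n+1)) atTop (𝓝 z) := hz.comp (tendsto_add_atTop_nat 1)
      exact tendsto_nhds_unique h6 h7
  -- uniqueness via comparability
  have haux : ∀ w y : M, (w ≤ y ∨ y ≤ w) → f y = y →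
      Tendsto (fun n => f^[n] w) atTop (𝓝 y) := by
    intro w y hcompwy hy
    have hiter : ∀ n, f^[n] y = y := fun n => Function.iterate_fixed hy n
    have hcomp2 : ∀ n, f^[n] w ≤ y ∨ y ≤ f^[n] w := by
      intro n
      induction n with
      | zero => simpa using hcompwy
      | succ k ih =>
        rcases ih with h | h
        · left
          have := hf_mono _ _ h
          rwa [← Function.iterate_succ_apply' f k w, hy] at this
        · right
          have := hf_mono _ _ h
          rwa [← Function.iterate_succ_apply' f k w, hy] at this
    set e : ℕ → ℝ := fun n => dist (f^[n] w) y with he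
    have herec : ∀ n, e (n+1) ≤ β (e n) * e n := by
      intro n
      rcases hcomp2 n with h | h
      · have := hf_contr y (f^[n] w) h
        rw [hy] at this
        calc e (n+1) = dist y (f (f^[n] w)) := by
              show dist (f^[n+1] w) y = _
              rw [Function.iterate_succ_apply' f n w, dist_comm]
          _ ≤ β (dist y (f^[n] w)) * dist y (f^[n] w) := this
          _ = β (e n) * e n := by rw [he]; simp [dist_comm]
      · have := hf_contr (f^[n] w) y h
        rw [hy] at this
        calc e (n+1) = dist (f (f^[n] w)) y := by
              show dist (f^[n+1] w) y = _
              rw [Function.iterate_succ_apply' f n w]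
          _ ≤ β (dist (f^[n] w) y) * dist (f^[n] w) y := this
          _ = β (e n) * e n := rfl
    have := key e (fun n => dist_nonneg) herec
    exact tendsto_iff_dist_tendsto_zero.2 this
  refine ⟨z, hfz, fun y hy => ?_⟩
  obtain ⟨w, hwy, hwz⟩ := hcomp y z
  have h1 := haux w y hwy hy
  have h2 := haux w z hwz hfz
  exact tendsto_nhds_unique h1 h2
end

section
/- Let E be a real Banach space with norm ‖·‖ and P ⊆ E a cone, with induced partial order ≤. Then P is normal (i.e., there exists N > 0 such that 0 ≤ x ≤ y implies ‖x‖ ≤ N‖y‖) if and only if there exists a norm ‖·‖₁ on E equivalent to ‖·‖ (i.e., there exist M > m > 0 with m‖x‖₁ ≤ ‖x‖ ≤ M‖x‖₁ for all x) which is monotone, meaning 0 ≤ x ≤ y implies ‖x‖₁ ≤ ‖y‖₁. -/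
open Metric Set
open scoped Pointwise

/-- A cone `P` in a real Banach space `E` is normal (there is `N > 0` with
`0 ≤ x ≤ y ⇒ ‖x‖ ≤ N‖y‖`, the order being induced by `P` via `x ≤ y ↔ y - x ∈ P`)
if and only if there is a norm `‖·‖₁` on `E`, equivalent to `‖·‖`
(i.e. `m‖x‖₁ ≤ ‖x‖ ≤ M‖x‖₁` for some `M > m > 0`), which is monotone:
`0 ≤ x ≤ y ⇒ ‖x‖₁ ≤ ‖y‖₁`. -/
theorem cone_normal_iff_monotone_equivalent_norm
    {E : Type*} [NormedAddCommGroup E] [NormedSpace ℝ E] [CompleteSpace E]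
    (P : Set E) (hP_nonempty : P.Nonempty) (hP_closed : IsClosed P)
    (hP_convex : Convex ℝ P)
    (hP_smul : ∀ x ∈ P, ∀ l : ℝ, 0 ≤ l → l • x ∈ P)
    (hP_pointed : ∀ x : E, x ∈ P → -x ∈ P → x = 0) :
    (∃ N : ℝ, 0 < N ∧ ∀ x y : E, x ∈ P → y - x ∈ P → ‖x‖ ≤ N * ‖y‖) ↔
    (∃ n : E → ℝ,
      (∀ x y : E, n (x + y) ≤ n x + n y) ∧
      (∀ (a : ℝ) (x : E), n (a • x) = |a| * n x) ∧
      (∃ M m : ℝ, 0 < m ∧ m < M ∧ ∀ x : E, m * n x ≤ ‖x‖ ∧ ‖x‖ ≤ M * n x) ∧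
      (∀ x y : E, x ∈ P → y - x ∈ P → n x ≤ n y)) := by
  have h0P : (0 : E) ∈ P := by
    obtain ⟨x, hx⟩ := hP_nonempty
    simpa using hP_smul x hx 0 le_rfl
  have haddP : ∀ u ∈ P, ∀ v ∈ P, u + v ∈ P := by
    intro u hu v hv
    have hmid : (1/2 : ℝ) • u + (1/2 : ℝ) • v ∈ P :=
      hP_convex hu hv (by norm_num) (by norm_num) (by norm_num)
    have := hP_smul _ hmid 2 (by norm_num)
    rw [smul_add, smul_smul, smul_smul] at this
    norm_num at this
    exact this
  constructor
  · rintro ⟨N, hN, hNprop⟩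
    set D : Set E := (closedBall (0:E) 1 + P) ∩ (closedBall (0:E) 1 - P) with hD
    have hBD : closedBall (0:E) 1 ⊆ D := by
      intro b hb
      constructor
      · exact ⟨b, hb, 0, h0P, add_zero b⟩
      · exact ⟨b, hb, 0, h0P, sub_zero b⟩
    have hDconv : Convex ℝ D :=
      ((convex_closedBall _ _).add hP_convex).inter ((convex_closedBall _ _).sub hP_convex)
    have hDabs : Absorbent ℝ D := fun x =>
      ((absorbent_ball_zero one_pos) x).mono_left (ball_subset_closedBall.trans hBD)
    have hDsymm : ∀ x ∈ D, -x ∈ D := by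
      rintro x ⟨⟨b1, hb1, p, hp, h1⟩, ⟨b2, hb2, q, hq, h2⟩⟩
      have h1' : b1 + p = x := h1
      have h2' : b2 - q = x := h2
      constructor
      · refine ⟨-b2, by simpa using hb2, q, hq, ?_⟩
        rw [← h2']; abel
      · refine ⟨-b1, by simpa using hb1, p, hp, ?_⟩
        rw [← h1']; abel
    have hDbound : D ⊆ ball (0:E) (2 + 2*N) := by
      rintro x ⟨⟨b1, hb1, p, hp, h1⟩, ⟨b2, hb2, q, hq, h2⟩⟩
      have h1' : b1 + p = x := h1
      have h2' : b2 - q = x := h2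
      simp only [mem_closedBall, dist_zero_right] at hb1 hb2
      have key : (b1 + p) + q = b2 := by
        rw [h1', ← h2']; abel
      have hpq : p + q = b2 - b1 := by rw [← key]; abel
      have hple : ‖p‖ ≤ N * ‖p + q‖ := by
        have : (p + q) - p ∈ P := by simpa using hq
        exact hNprop p (p+q) hp this
      have hnorm : ‖p + q‖ ≤ 2 := by
        rw [hpq]
        calc ‖b2 - b1‖ ≤ ‖b2‖ + ‖b1‖ := norm_sub_le _ _
          _ ≤ 2 := by linarith
      have hx : ‖x‖ ≤ 1 + 2*N := by
        calc ‖x‖ = ‖b1 + p‖ := by rw [h1']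
          _ ≤ ‖b1‖ + ‖p‖ := norm_add_le _ _
          _ ≤ 1 + N * 2 := by nlinarith [norm_nonneg p]
          _ = 1 + 2*N := by ring
      rw [mem_ball, dist_zero_right]
      linarith
    refine ⟨gauge D, fun x y => gauge_add_le hDconv hDabs x y, ?_, ?_, ?_⟩
    · -- homogeneity
      intro a x
      rcases le_or_gt 0 a with ha | ha
      · rw [gauge_smul_of_nonneg ha, smul_eq_mul, abs_of_nonneg ha]
      · have h : a • x = -((-a) • x) := by rw [neg_smul, neg_neg]
        rw [h, gauge_neg hDsymm, gauge_smul_of_nonneg (by linarith : (0:ℝ) ≤ -a),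
          smul_eq_mul, abs_of_neg ha]
    · -- equivalence
      refine ⟨2 + 2*N, 1, one_pos, by linarith, fun x => ⟨?_, ?_⟩⟩
      · rw [one_mul]
        have h := gauge_mono (absorbent_ball_zero one_pos) (ball_subset_closedBall.trans hBD) x
        rwa [gauge_ball zero_le_one, div_one] at h
      · have h := gauge_mono hDabs hDbound x
        rw [gauge_ball (by linarith : (0:ℝ) ≤ 2 + 2*N), div_le_iff₀ (by linarith : (0:ℝ) < 2 + 2*N)] at h
        linarith
    · -- monotonicity
      intro x y hx hyx
      have hsub : {r : ℝ | 0 < r ∧ y ∈ r • D} ⊆ {r : ℝ | 0 < r ∧ x ∈ r • D} := by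
        rintro r ⟨hr, hyD⟩
        refine ⟨hr, ?_⟩
        rw [mem_smul_set_iff_inv_smul_mem₀ hr.ne'] at hyD ⊢
        obtain ⟨-, b2, hb2, q, hq, h2⟩ := hyD
        have h2' : b2 - q = r⁻¹ • y := h2
        have hrinv : (0:ℝ) ≤ r⁻¹ := inv_nonneg.2 hr.le
        constructor
        · exact ⟨0, by simp, r⁻¹ • x, hP_smul x hx r⁻¹ hrinv, by simp⟩
        · refine ⟨b2, hb2, q + r⁻¹ • (y - x),
            haddP q hq _ (hP_smul _ hyx r⁻¹ hrinv), ?_⟩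
          show b2 - (q + r⁻¹ • (y - x)) = r⁻¹ • x
          rw [smul_sub, ← h2']; abel
      exact csInf_le_csInf ⟨0, fun r hr => hr.1.le⟩ hDabs.gauge_set_nonempty hsub
  · rintro ⟨n, hadd, hhom, ⟨M, m, hm, hmM, hbd⟩, hmono⟩
    have hM : (0:ℝ) < M := hm.trans hmM
    refine ⟨M / m, by positivity, fun x y hx hyx => ?_⟩
    have h1 : ‖x‖ ≤ M * n x := (hbd x).2
    have h2 : m * n y ≤ ‖y‖ := (hbd y).1
    have h3 : n x ≤ n y := hmono x y hx hyx
    rw [div_mul_eq_mul_div, le_div_iff₀ hm]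
    calc ‖x‖ * m ≤ (M * n x) * m := mul_le_mul_of_nonneg_right h1 hm.le
      _ ≤ (M * n y) * m := mul_le_mul_of_nonneg_right (mul_le_mul_of_nonneg_left h3 hM.le) hm.le
      _ = M * (m * n y) := by ring
      _ ≤ M * ‖y‖ := mul_le_mul_of_nonneg_left h2 hM.le
end

section
/- Let E be a real Banach space, P ⊆ E a normal cone with normal constant N, and ≤ the induced partial order. Suppose A : E → E is a decreasing operator (u ≤ v implies Av ≤ Au) satisfying: (H) there exists an increasing function f : (0, ∞) → (0, 1) such that Au − Av ≤ f(‖v − u‖)(v − u) for all u, v ∈ E with u ≤ v. Suppose moreover that for each x, y ∈ E both inf{x, y} and sup{x, y} exist in (E, ≤). Then A has a unique fixed point in E. -/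
/-- Main theorem: let `E` be a real Banach space ordered by a normal cone `P` with
normal constant `N` (order `u ≤ v ↔ v - u ∈ P`), in which every pair of elements
has an infimum and a supremum. If `A : E → E` is decreasing and there is an
increasing function `f : (0,∞) → (0,1)` with
`Au - Av ≤ f(‖v - u‖) • (v - u)` whenever `u ≤ v`, then `A` has a unique fixed
point in `E`. -/
theorem ordered_contraction_unique_fixed_point
    {E : Type*} [NormedAddCommGroup E] [NormedSpace ℝ E] [CompleteSpace E]
    (P : Set E) (hP_nonempty : P.Nonempty) (hP_closed : IsClosed P)
    (hP_convex : Convex ℝ P)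
    (hP_smul : ∀ x ∈ P, ∀ l : ℝ, 0 ≤ l → l • x ∈ P)
    (hP_pointed : ∀ x : E, x ∈ P → -x ∈ P → x = 0)
    (N : ℝ) (hN : 0 < N)
    (hP_normal : ∀ x y : E, x ∈ P → y - x ∈ P → ‖x‖ ≤ N * ‖y‖)
    (A : E → E)
    (hA_dec : ∀ u v : E, v - u ∈ P → A u - A v ∈ P)
    (f : ℝ → ℝ)
    (hf_mono : ∀ s t : ℝ, 0 < s → s ≤ t → f s ≤ f t)
    (hf_range : ∀ t : ℝ, 0 < t → 0 < f t ∧ f t < 1)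
    (hA_contr : ∀ u v : E, v - u ∈ P →
      f ‖v - u‖ • (v - u) - (A u - A v) ∈ P)
    (hinf : ∀ x y : E, ∃ w : E, x - w ∈ P ∧ y - w ∈ P ∧
      ∀ z : E, x - z ∈ P → y - z ∈ P → w - z ∈ P)
    (hsup : ∀ x y : E, ∃ w : E, w - x ∈ P ∧ w - y ∈ P ∧
      ∀ z : E, z - x ∈ P → z - y ∈ P → z - w ∈ P) :
    ∃! x : E, A x = x := by
  classical
  -- basic cone facts
  have pzero : (0:E) ∈ P := by
    obtain ⟨x, hx⟩ := hP_nonempty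
    simpa using hP_smul x hx 0 le_rfl
  have padd : ∀ a b : E, a ∈ P → b ∈ P → a + b ∈ P := by
    intro a b ha hb
    have h := hP_convex ha hb (by norm_num : (0:ℝ) ≤ 1/2) (by norm_num : (0:ℝ) ≤ 1/2)
      (by norm_num)
    have h2 := hP_smul _ h 2 (by norm_num)
    rw [smul_add, smul_smul, smul_smul] at h2
    norm_num at h2
    exact h2
  have peq : ∀ a b : E, b - a ∈ P → a - b ∈ P → a = b := by
    intro a b h1 h2
    have h3 : b - a = 0 := hP_pointed (b - a) h1 (by simpa [neg_sub] using h2)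
    exact (sub_eq_zero.mp h3).symm
  -- uniqueness
  have uniq : ∀ x y : E, A x = x → A y = y → x = y := by
    intro x y hx hy
    obtain ⟨w1, hw1x, hw1y, hw1min⟩ := hinf x y
    obtain ⟨w2, hw2x, hw2y, hw2max⟩ := hsup x y
    have hxw2 : x - A w2 ∈ P := by have := hA_dec x w2 hw2x; rwa [hx] at this
    have hyw2 : y - A w2 ∈ P := by have := hA_dec y w2 hw2y; rwa [hy] at this
    have h1 : w1 - A w2 ∈ P := hw1min _ hxw2 hyw2
    have hw1xA : A w1 - x ∈ P := by have := hA_dec w1 x hw1x; rwa [hx] at this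
    have hw1yA : A w1 - y ∈ P := by have := hA_dec w1 y hw1y; rwa [hy] at this
    have h2 : A w1 - w2 ∈ P := hw2max _ hw1xA hw1yA
    have hw12 : w2 - w1 ∈ P := by
      have := padd _ _ hw2x hw1x
      rwa [sub_add_sub_cancel] at this
    have hge : (A w1 - A w2) - (w2 - w1) ∈ P := by
      have h3 := padd _ _ h2 h1
      have heq : (A w1 - w2) + (w1 - A w2) = (A w1 - A w2) - (w2 - w1) := by abel
      rwa [heq] at h3
    have heqw : w1 = w2 := by
      by_contra hne
      have hrpos : 0 < ‖w2 - w1‖ := by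
        rw [norm_pos_iff]
        intro h
        exact hne (sub_eq_zero.mp h).symm
      have hf := hf_range _ hrpos
      have hc := hA_contr w1 w2 hw12
      have hP1 : f ‖w2 - w1‖ • (w2 - w1) - (w2 - w1) ∈ P := by
        have h3 := padd _ _ hc hge
        have heq : (f ‖w2 - w1‖ • (w2 - w1) - (A w1 - A w2))
            + ((A w1 - A w2) - (w2 - w1))
            = f ‖w2 - w1‖ • (w2 - w1) - (w2 - w1) := by abel
        rwa [heq] at h3
      have hP2 : (1 - f ‖w2 - w1‖) • (w2 - w1) ∈ P :=
        hP_smul _ hw12 _ (by linarith [hf.2])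
      have hz : (1 - f ‖w2 - w1‖) • (w2 - w1) = 0 := by
        apply hP_pointed _ hP2
        rw [sub_smul, one_smul, neg_sub]
        exact hP1
      rcases smul_eq_zero.mp hz with h | h
      · linarith [hf.2, sub_eq_zero.mp h]
      · exact hne (sub_eq_zero.mp h).symm
    have hxw1 : x = w1 := by
      refine peq x w1 ?_ hw1x
      rw [heqw]; exact hw2x
    have hyw1 : y = w1 := by
      refine peq y w1 ?_ hw1y
      rw [heqw]; exact hw2y
    rw [hxw1, hyw1]
  -- initial point
  obtain ⟨v0, hv0a, hv0b, -⟩ := hsup 0 (A 0)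
  have hv0 : v0 - A v0 ∈ P := by
    have h1 : A 0 - A v0 ∈ P := hA_dec 0 v0 (by simpa using hv0a)
    have := padd _ _ hv0b h1
    rwa [sub_add_sub_cancel] at this
  -- invariance of [A v0, v0]
  have hinv : ∀ x : E, x - A v0 ∈ P → v0 - x ∈ P → (A x - A v0 ∈ P ∧ v0 - A x ∈ P) := by
    intro x h1 h2
    refine ⟨hA_dec x v0 h2, ?_⟩
    rcases eq_or_ne x v0 with rfl | hne
    · exact hv0
    · have hr : (0:ℝ) < ‖v0 - x‖ := by
        rw [norm_pos_iff]
        intro h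
        exact hne (sub_eq_zero.mp h).symm
      have hf := hf_range _ hr
      have hc := hA_contr x v0 h2
      have h3 : (1 - f ‖v0 - x‖) • (v0 - x) ∈ P := hP_smul _ h2 _ (by linarith [hf.2])
      have h4 := padd _ _ (padd _ _ h1 hc) h3
      have heq : (x - A v0) + (f ‖v0 - x‖ • (v0 - x) - (A x - A v0))
          + (1 - f ‖v0 - x‖) • (v0 - x) = v0 - A x := by
        rw [sub_smul, one_smul]; abel
      rwa [heq] at h4
  -- the iteration sequences
  obtain ⟨u, v, hu0, hv0', hus, hvs⟩ :
      ∃ u v : ℕ → E, u 0 = A v0 ∧ v 0 = v0 ∧ (∀ n, u (n+1) = A (v n)) ∧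
        (∀ n, v (n+1) = A (u n)) := by
    refine ⟨fun n => (Nat.rec (motive := fun _ => E × E) (A v0, v0) (fun _ p => (A p.2, A p.1)) n).1,
      fun n => (Nat.rec (motive := fun _ => E × E) (A v0, v0) (fun _ p => (A p.2, A p.1)) n).2,
      rfl, rfl, fun n => rfl, fun n => rfl⟩
  have key : ∀ n, (v n - u n ∈ P) ∧ (u (n+1) - u n ∈ P) ∧ (v n - v (n+1) ∈ P) := by
    intro n
    induction n with
    | zero =>
      refine ⟨by rw [hu0, hv0']; exact hv0, ?_, ?_⟩
      · rw [hus 0, hv0', hu0]; simpa using pzero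
      · rw [hvs 0, hv0', hu0]
        exact (hinv (A v0) (by simpa using pzero) hv0).2
    | succ n ih =>
      obtain ⟨h1, h2, h3⟩ := ih
      refine ⟨?_, ?_, ?_⟩
      · rw [hus, hvs]; exact hA_dec _ _ h1
      · rw [hus, hus]; exact hA_dec _ _ h3
      · rw [hvs, hvs]; exact hA_dec _ _ h2
  have humono : ∀ n m : ℕ, n ≤ m → u m - u n ∈ P := by
    intro n m h
    induction m, h using Nat.le_induction with
    | base => simpa using pzero
    | succ m hm ih =>
      have := padd _ _ (key m).2.1 ih
      rwa [sub_add_sub_cancel] at this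
  have hvmono : ∀ n m : ℕ, n ≤ m → v n - v m ∈ P := by
    intro n m h
    induction m, h using Nat.le_induction with
    | base => simpa using pzero
    | succ m hm ih =>
      have := padd _ _ ih (key m).2.2
      rwa [sub_add_sub_cancel] at this
  have hvum : ∀ n m : ℕ, n ≤ m → v n - u m ∈ P := by
    intro n m h
    have := padd _ _ (hvmono n m h) (key m).1
    rwa [sub_add_sub_cancel] at this
  by_cases hall : ∀ n, v n - u n ≠ 0
  · -- all interval widths nonzero
    set r := f ((1 + N) * ‖v 0 - u 0‖) with hr_def
    have hd0 : (0:ℝ) < ‖v 0 - u 0‖ := norm_pos_iff.2 (hall 0)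
    have hM : 0 < (1 + N) * ‖v 0 - u 0‖ := by positivity
    have hr0 : 0 < r ∧ r < 1 := hf_range _ hM
    set c : ℕ → ℝ := fun n => ∏ k ∈ Finset.range n, f ‖v k - u k‖ with hc_def
    have hQ : ∀ n, (c n • (v 0 - u 0) - (v n - u n) ∈ P) ∧ 0 < c n ∧ c n ≤ 1 ∧ c n ≤ r ^ n := by
      intro n
      induction n with
      | zero =>
        refine ⟨by simpa [hc_def] using pzero, by simp [hc_def], by simp [hc_def], by simp [hc_def]⟩
      | succ n ih =>
        obtain ⟨ihP, ihpos, ih1, ihr⟩ := ih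
        have hdn_pos : 0 < ‖v n - u n‖ := norm_pos_iff.2 (hall n)
        have hnorm := hP_normal (v n - u n) (c n • (v 0 - u 0)) (key n).1 ihP
        rw [norm_smul, Real.norm_eq_abs, abs_of_pos ihpos] at hnorm
        have hdnM : ‖v n - u n‖ ≤ (1 + N) * ‖v 0 - u 0‖ := by nlinarith
        have hfn := hf_range _ hdn_pos
        have hfM : f ‖v n - u n‖ ≤ r := hf_mono _ _ hdn_pos hdnM
        have hc_succ : c (n+1) = c n * f ‖v n - u n‖ := Finset.prod_range_succ _ _
        refine ⟨?_, ?_, ?_, ?_⟩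
        · have h1 : f ‖v n - u n‖ • (c n • (v 0 - u 0) - (v n - u n)) ∈ P :=
            hP_smul _ ihP _ hfn.1.le
          have h2 := hA_contr (u n) (v n) (key n).1
          have heq : c (n+1) • (v 0 - u 0) - (v (n+1) - u (n+1))
              = f ‖v n - u n‖ • (c n • (v 0 - u 0) - (v n - u n))
              + (f ‖v n - u n‖ • (v n - u n) - (A (u n) - A (v n))) := by
            rw [hus, hvs, hc_succ]
            module
          rw [heq]
          exact padd _ _ h1 h2
        · rw [hc_succ]; exact mul_pos ihpos hfn.1
        · rw [hc_succ]; nlinarith [hfn.1, hfn.2]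
        · rw [hc_succ, pow_succ]
          exact mul_le_mul ihr hfM hfn.1.le (pow_nonneg hr0.1.le n)
    have hdn_le : ∀ n, ‖v n - u n‖ ≤ N * ‖v 0 - u 0‖ * r ^ n := by
      intro n
      have hnorm := hP_normal (v n - u n) (c n • (v 0 - u 0)) (key n).1 (hQ n).1
      rw [norm_smul, Real.norm_eq_abs, abs_of_pos (hQ n).2.1] at hnorm
      nlinarith [(hQ n).2.2.2, (hQ n).2.1,
        mul_nonneg (mul_nonneg hN.le hd0.le) (sub_nonneg.mpr (hQ n).2.2.2)]
    have hdiff : ∀ n m : ℕ, n ≤ m → ‖u m - u n‖ ≤ N * ‖v n - u n‖ := by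
      intro n m h
      apply hP_normal _ _ (humono n m h)
      have := hvum n m h
      have heq : v n - u m = (v n - u n) - (u m - u n) := by abel
      rwa [heq] at this
    have hcauchy : CauchySeq u := by
      apply cauchySeq_of_le_geometric r (N * (N * ‖v 0 - u 0‖)) hr0.2
      intro n
      rw [dist_eq_norm, norm_sub_rev]
      calc ‖u (n+1) - u n‖ ≤ N * ‖v n - u n‖ := hdiff n (n+1) (Nat.le_succ n)
        _ ≤ N * (N * ‖v 0 - u 0‖ * r ^ n) := by
            have := hdn_le n
            nlinarith
        _ = N * (N * ‖v 0 - u 0‖) * r ^ n := by ring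
    obtain ⟨x, hx⟩ := cauchySeq_tendsto_of_complete hcauchy
    have hxu : ∀ n, x - u n ∈ P := by
      intro n
      have ht : Filter.Tendsto (fun m => u m - u n) Filter.atTop (nhds (x - u n)) :=
        hx.sub tendsto_const_nhds
      apply hP_closed.mem_of_tendsto ht
      filter_upwards [Filter.eventually_ge_atTop n] with m hm
      exact humono n m hm
    have hxv : ∀ n, v n - x ∈ P := by
      intro n
      have ht : Filter.Tendsto (fun m => v n - u m) Filter.atTop (nhds (v n - x)) :=
        tendsto_const_nhds.sub hx
      apply hP_closed.mem_of_tendsto ht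
      filter_upwards [Filter.eventually_ge_atTop n] with m hm
      exact hvum n m hm
    have hAxu : ∀ n, A x - u (n+1) ∈ P := by
      intro n; rw [hus]; exact hA_dec x (v n) (hxv n)
    have hAxv : ∀ n, v (n+1) - A x ∈ P := by
      intro n; rw [hvs]; exact hA_dec (u n) x (hxu n)
    have hbound : ∀ n : ℕ, ‖A x - x‖ ≤ 2 * N * ‖v (n+1) - u (n+1)‖ := by
      intro n
      have h1 : ‖A x - u (n+1)‖ ≤ N * ‖v (n+1) - u (n+1)‖ := by
        apply hP_normal _ _ (hAxu n)
        have := hAxv n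
        have heq : v (n+1) - A x = (v (n+1) - u (n+1)) - (A x - u (n+1)) := by abel
        rwa [heq] at this
      have h2 : ‖x - u (n+1)‖ ≤ N * ‖v (n+1) - u (n+1)‖ := by
        apply hP_normal _ _ (hxu (n+1))
        have := hxv (n+1)
        have heq : v (n+1) - x = (v (n+1) - u (n+1)) - (x - u (n+1)) := by abel
        rwa [heq] at this
      calc ‖A x - x‖ = ‖(A x - u (n+1)) - (x - u (n+1))‖ := by congr 1; abel
        _ ≤ ‖A x - u (n+1)‖ + ‖x - u (n+1)‖ := norm_sub_le _ _
        _ ≤ 2 * N * ‖v (n+1) - u (n+1)‖ := by linarith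
    have hAx : A x = x := by
      have hb2 : ∀ n : ℕ, ‖A x - x‖ ≤ (2 * N * (N * ‖v 0 - u 0‖)) * r ^ n := by
        intro n
        have h1 := hbound n
        have h2 := hdn_le (n+1)
        have h3 : r ^ (n+1) ≤ r ^ n := by
          rw [pow_succ]
          nlinarith [pow_nonneg hr0.1.le n, hr0.1, hr0.2]
        have h4 : ‖v (n+1) - u (n+1)‖ ≤ N * ‖v 0 - u 0‖ * r ^ n := by
          nlinarith [mul_nonneg (mul_nonneg hN.le (norm_nonneg (v 0 - u 0)))
            (sub_nonneg.mpr h3)]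
        nlinarith [mul_le_mul_of_nonneg_left h4 (by positivity : (0:ℝ) ≤ 2 * N)]
      have ht : Filter.Tendsto (fun n : ℕ => (2 * N * (N * ‖v 0 - u 0‖)) * r ^ n)
          Filter.atTop (nhds 0) := by
        have := tendsto_pow_atTop_nhds_zero_of_lt_one hr0.1.le hr0.2
        simpa using this.const_mul (2 * N * (N * ‖v 0 - u 0‖))
      have hle : ‖A x - x‖ ≤ 0 :=
        ge_of_tendsto ht (Filter.Eventually.of_forall hb2)
      have : A x - x = 0 := by
        have := norm_le_zero_iff.mp hle
        exact this
      exact sub_eq_zero.mp this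
    exact ⟨x, hAx, fun y hy => uniq y x hy hAx⟩
  · -- some width is zero : direct fixed point
    push_neg at hall
    obtain ⟨n, hn⟩ := hall
    have h1 := (key n).2.1
    have hsum : (u (n+1) - u n) + ((v (n+1) - u (n+1)) + (v n - v (n+1))) = 0 := by
      have : (u (n+1) - u n) + ((v (n+1) - u (n+1)) + (v n - v (n+1))) = v n - u n := by abel
      rw [this, hn]
    have h2 : (v (n+1) - u (n+1)) + (v n - v (n+1)) ∈ P :=
      padd _ _ (key (n+1)).1 (key n).2.2
    have h3 : u (n+1) - u n = 0 := by
      apply hP_pointed _ h1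
      rw [neg_eq_of_add_eq_zero_right hsum]
      exact h2
    have hvu : v n = u n := sub_eq_zero.mp hn
    have hfix : A (v n) = v n := by
      have : u (n+1) = u n := sub_eq_zero.mp h3
      rw [hus] at this
      rw [this, hvu]
    exact ⟨v n, hfix, fun y hy => uniq y (v n) hy hfix⟩
end

section
/- Let E be a real Banach space, P ⊆ E a normal cone with normal constant N, and ≤ the induced partial order. Suppose A : E → E is a decreasing operator and there exists an increasing function f : (0, ∞) → (0, 1) such that Au − Av ≤ f(‖v − u‖)(v − u) for all u, v ∈ E with u ≤ v. Then the operator B := A ∘ A is increasing, and for all u, v ∈ E with u ≤ v one has Bv − Bu ≤ f(N·f(‖u − v‖)·‖u − v‖)·f(‖u − v‖)·(v − u). -/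
/-- If `P` is a normal cone with normal constant `N` in a real Banach space `E`
(order `u ≤ v ↔ v - u ∈ P`), `A : E → E` is decreasing and
`Au - Av ≤ f(‖v - u‖) • (v - u)` whenever `u ≤ v` for some increasing
`f : (0,∞) → (0,1)`, then `B := A ∘ A` is increasing and satisfies
`Bv - Bu ≤ f(N·f(‖u-v‖)·‖u-v‖)·f(‖u-v‖) • (v - u)` whenever `u ≤ v`. -/
theorem square_increasing_and_contraction
    {E : Type*} [NormedAddCommGroup E] [NormedSpace ℝ E] [CompleteSpace E]
    (P : Set E) (hP_nonempty : P.Nonempty) (hP_closed : IsClosed P)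
    (hP_convex : Convex ℝ P)
    (hP_smul : ∀ x ∈ P, ∀ l : ℝ, 0 ≤ l → l • x ∈ P)
    (hP_pointed : ∀ x : E, x ∈ P → -x ∈ P → x = 0)
    (N : ℝ) (hN : 0 < N)
    (hP_normal : ∀ x y : E, x ∈ P → y - x ∈ P → ‖x‖ ≤ N * ‖y‖)
    (A : E → E)
    (hA_dec : ∀ u v : E, v - u ∈ P → A u - A v ∈ P)
    (f : ℝ → ℝ)
    (hf_mono : ∀ s t : ℝ, 0 < s → s ≤ t → f s ≤ f t)
    (hf_range : ∀ t : ℝ, 0 < t → 0 < f t ∧ f t < 1)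
    (hA_contr : ∀ u v : E, v - u ∈ P →
      f ‖v - u‖ • (v - u) - (A u - A v) ∈ P) :
    (∀ u v : E, v - u ∈ P → (A ∘ A) v - (A ∘ A) u ∈ P) ∧
    (∀ u v : E, v - u ∈ P →
      (f (N * f ‖u - v‖ * ‖u - v‖) * f ‖u - v‖) • (v - u) -
        ((A ∘ A) v - (A ∘ A) u) ∈ P) := by
  have hadd : ∀ x ∈ P, ∀ y ∈ P, x + y ∈ P := by
    intro x hx y hy
    have h := hP_convex hx hy (by norm_num : (0:ℝ) ≤ 1/2)
      (by norm_num : (0:ℝ) ≤ 1/2) (by norm_num)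
    have h2 := hP_smul _ h 2 (by norm_num)
    have heq : (2:ℝ) • ((1/2:ℝ) • x + (1/2:ℝ) • y) = x + y := by
      rw [smul_add, smul_smul, smul_smul]; norm_num
    rwa [heq] at h2
  have h0 : (0:E) ∈ P := by
    obtain ⟨x, hx⟩ := hP_nonempty
    simpa using hP_smul x hx 0 le_rfl
  constructor
  · intro u v h
    exact hA_dec (A v) (A u) (hA_dec u v h)
  · intro u v huv
    by_cases hvu : v = u
    · subst hvu
      simpa using h0
    · have ht : 0 < ‖v - u‖ := norm_pos_iff.mpr (sub_ne_zero.mpr hvu)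
      have htuv : ‖u - v‖ = ‖v - u‖ := norm_sub_rev u v
      have hft := hf_range _ ht
      have h1 : A u - A v ∈ P := hA_dec u v huv
      have h2 : f ‖v - u‖ • (v - u) - (A u - A v) ∈ P := hA_contr u v huv
      have hnorm : ‖A u - A v‖ ≤ N * (f ‖v - u‖ * ‖v - u‖) := by
        have := hP_normal (A u - A v) (f ‖v - u‖ • (v - u)) h1 h2
        rwa [norm_smul, Real.norm_eq_abs, abs_of_pos hft.1] at this
      have hNft : 0 < N * (f ‖v - u‖ * ‖v - u‖) := mul_pos hN (mul_pos hft.1 ht)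
      by_cases hs : A u = A v
      · have hc : 0 ≤ f (N * f ‖u - v‖ * ‖u - v‖) * f ‖u - v‖ := by
          rw [htuv, mul_assoc]
          exact (mul_pos (hf_range _ hNft).1 hft.1).le
        have hBz : (A ∘ A) v - (A ∘ A) u = 0 := by
          simp [Function.comp, hs]
        rw [hBz, sub_zero]
        exact hP_smul _ huv _ hc
      · have hs' : 0 < ‖A u - A v‖ := norm_pos_iff.mpr (sub_ne_zero.mpr hs)
        have h3 : f ‖A u - A v‖ • (A u - A v) - (A (A v) - A (A u)) ∈ P :=
          hA_contr (A v) (A u) h1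
        have h4 : f ‖A u - A v‖ • (f ‖v - u‖ • (v - u) - (A u - A v)) ∈ P :=
          hP_smul _ h2 _ (hf_range _ hs').1.le
        have h5 : ((f (N * (f ‖v - u‖ * ‖v - u‖)) - f ‖A u - A v‖) * f ‖v - u‖) • (v - u) ∈ P :=
          hP_smul _ huv _ (mul_nonneg (sub_nonneg.mpr (hf_mono _ _ hs' hnorm)) hft.1.le)
        have key := hadd _ (hadd _ h3 _ h4) _ h5
        have heq : (f (N * f ‖u - v‖ * ‖u - v‖) * f ‖u - v‖) • (v - u) -
            ((A ∘ A) v - (A ∘ A) u)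
            = (f ‖A u - A v‖ • (A u - A v) - (A (A v) - A (A u)))
              + f ‖A u - A v‖ • (f ‖v - u‖ • (v - u) - (A u - A v))
              + ((f (N * (f ‖v - u‖ * ‖v - u‖)) - f ‖A u - A v‖) * f ‖v - u‖) • (v - u) := by
          simp only [Function.comp_apply, htuv, mul_assoc]
          module
        rw [heq]
        exact key
end

section
/- Let E be a real Banach space, P ⊆ E a normal cone with normal constant N, and ≤ the induced partial order. Suppose B : E → E is an increasing operator and there exists an increasing function f : (0, ∞) → (0, 1) such that Bv − Bu ≤ f(N·f(‖u − v‖)·‖u − v‖)·f(‖u − v‖)·(v − u) for all u, v ∈ E with u ≤ v, and suppose there exists x₀ ∈ E with x₀ ≤ Bx₀. Then the iterative sequence defined by xₙ₊₁ = Bxₙ (n = 0, 1, 2, …) is increasing (xₙ ≤ xₙ₊₁ for all n) and is a Cauchy sequence in E. -/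
/-!
Write `dₙ = xₙ₊₁ - xₙ` and `φ(t) = f(N·f(t)·t)·f(t)`. Monotonicity of `B` makes every `dₙ`
nonnegative. If `x₀` is not a fixed point, put `c = φ(N‖d₀‖) < 1`. By induction `dₙ ≤ cⁿ d₀`:
normality gives `‖dₙ‖ ≤ N cⁿ ‖d₀‖ ≤ N‖d₀‖`, so the contraction hypothesis applies with a factor
`φ(‖dₙ‖) ≤ c`, since `φ` is increasing. Normality once more gives `‖dₙ‖ ≤ N‖d₀‖ cⁿ`, and a
sequence with geometrically small steps is Cauchy.
-/

lemma iterate_succ_sub_mem {E : Type*} [Sub E] {P : Set E} {B : E → E}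
    (hB_inc : ∀ u v : E, v - u ∈ P → B v - B u ∈ P) {x₀ : E} (hx₀ : B x₀ - x₀ ∈ P) :
    ∀ n : ℕ, B^[n + 1] x₀ - B^[n] x₀ ∈ P
  | 0 => hx₀
  | n + 1 => by
    simpa only [Function.iterate_succ_apply'] using
      hB_inc _ _ (iterate_succ_sub_mem hB_inc hx₀ n)

section Cone

variable {E : Type*} [AddCommGroup E] [Module ℝ E] {P : Set E}

lemma add_mem_of_convex_of_smul_mem (hP_convex : Convex ℝ P)
    (hP_smul : ∀ x ∈ P, ∀ l : ℝ, 0 ≤ l → l • x ∈ P) {a b : E} (ha : a ∈ P) (hb : b ∈ P) :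
    a + b ∈ P := by
  have hmid : (1 / 2 : ℝ) • a + (1 / 2 : ℝ) • b ∈ P :=
    hP_convex ha hb (by norm_num) (by norm_num) (by norm_num)
  convert hP_smul _ hmid 2 (by norm_num) using 1
  module

lemma smul_sub_mem_of_le (hP_convex : Convex ℝ P)
    (hP_smul : ∀ x ∈ P, ∀ l : ℝ, 0 ≤ l → l • x ∈ P) {x y : E} {s t : ℝ}
    (hx : x ∈ P) (hst : s ≤ t) (hs : s • x - y ∈ P) : t • x - y ∈ P := by
  convert add_mem_of_convex_of_smul_mem hP_convex hP_smul hs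
    (hP_smul x hx (t - s) (sub_nonneg.mpr hst)) using 1
  module

lemma pow_smul_sub_mem_of_step (hP_convex : Convex ℝ P)
    (hP_smul : ∀ x ∈ P, ∀ l : ℝ, 0 ≤ l → l • x ∈ P) {d : ℕ → E} {c : ℝ} (hc : 0 ≤ c)
    (hd : d 0 ∈ P) (hstep : ∀ n, c ^ n • d 0 - d n ∈ P → c • d n - d (n + 1) ∈ P) :
    ∀ n, c ^ n • d 0 - d n ∈ P
  | 0 => by simpa using hP_smul _ hd 0 le_rfl
  | n + 1 => by
    have ih := pow_smul_sub_mem_of_step hP_convex hP_smul hc hd hstep n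
    convert add_mem_of_convex_of_smul_mem hP_convex hP_smul (hP_smul _ ih c hc) (hstep n ih)
      using 1
    rw [pow_succ']
    module

end Cone

section NormalCone

variable {E : Type*} [NormedAddCommGroup E] [NormedSpace ℝ E] {P : Set E} {N : ℝ}

lemma norm_le_of_pow_smul_sub_mem (hP_normal : ∀ x y : E, x ∈ P → y - x ∈ P → ‖x‖ ≤ N * ‖y‖)
    {c : ℝ} (hc : 0 ≤ c) {d₀ d : E} {n : ℕ} (hd : d ∈ P) (hle : c ^ n • d₀ - d ∈ P) :
    ‖d‖ ≤ N * ‖d₀‖ * c ^ n := by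
  have h := hP_normal d _ hd hle
  rw [norm_smul, Real.norm_of_nonneg (pow_nonneg hc n)] at h
  linarith

lemma cauchySeq_of_pow_smul_sub_mem
    (hP_normal : ∀ x y : E, x ∈ P → y - x ∈ P → ‖x‖ ≤ N * ‖y‖) {x : ℕ → E} {c : ℝ}
    (hc₀ : 0 ≤ c) (hc₁ : c < 1) (hx : ∀ n, x (n + 1) - x n ∈ P)
    (hle : ∀ n, c ^ n • (x 1 - x 0) - (x (n + 1) - x n) ∈ P) : CauchySeq x := by
  refine cauchySeq_of_le_geometric c (N * ‖x 1 - x 0‖) hc₁ fun n => ?_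
  rw [dist_comm, dist_eq_norm]
  exact norm_le_of_pow_smul_sub_mem hP_normal hc₀ (hx n) (hle n)

end NormalCone

section ContractionFactor

variable {f : ℝ → ℝ} {N : ℝ}

lemma contractionFactor_pos_lt_one (hN : 0 < N)
    (hf_range : ∀ t : ℝ, 0 < t → 0 < f t ∧ f t < 1) {t : ℝ} (ht : 0 < t) :
    0 < f (N * f t * t) * f t ∧ f (N * f t * t) * f t < 1 := by
  obtain ⟨hft₀, hft₁⟩ := hf_range t ht
  obtain ⟨hfa₀, hfa₁⟩ := hf_range (N * f t * t) (by positivity)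
  exact ⟨mul_pos hfa₀ hft₀, mul_lt_one_of_nonneg_of_lt_one_left hfa₀.le hfa₁ hft₁.le⟩

lemma contractionFactor_mono (hN : 0 < N) (hf_mono : ∀ s t : ℝ, 0 < s → s ≤ t → f s ≤ f t)
    (hf_range : ∀ t : ℝ, 0 < t → 0 < f t ∧ f t < 1) {s t : ℝ} (hs : 0 < s) (hst : s ≤ t) :
    f (N * f s * s) * f s ≤ f (N * f t * t) * f t := by
  have hfs := (hf_range s hs).1
  have hft := hf_mono s t hs hst
  have hNft : 0 ≤ N * f t := mul_nonneg hN.le (hfs.trans_le hft).le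
  have hinner : N * f s * s ≤ N * f t * t := by gcongr
  exact mul_le_mul (hf_mono _ _ (mul_pos (mul_pos hN hfs) hs) hinner) hft hfs.le
    (hf_range _ (mul_pos (mul_pos hN (hfs.trans_le hft)) (hs.trans_le hst))).1.le

lemma smul_sub_map_sub_mem {E : Type*} [NormedAddCommGroup E] [NormedSpace ℝ E] {P : Set E}
    (hP_convex : Convex ℝ P) (hP_smul : ∀ x ∈ P, ∀ l : ℝ, 0 ≤ l → l • x ∈ P) (hN : 0 < N)
    (hf_mono : ∀ s t : ℝ, 0 < s → s ≤ t → f s ≤ f t)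
    (hf_range : ∀ t : ℝ, 0 < t → 0 < f t ∧ f t < 1) {B : E → E}
    (hB_contr : ∀ u v : E, v - u ∈ P →
      (f (N * f ‖u - v‖ * ‖u - v‖) * f ‖u - v‖) • (v - u) - (B v - B u) ∈ P)
    {u v : E} {T : ℝ} (huv : v - u ∈ P) (hT : ‖v - u‖ ≤ T) :
    (f (N * f T * T) * f T) • (v - u) - (B v - B u) ∈ P := by
  rcases eq_or_ne u v with rfl | hne
  · simpa using hP_smul _ huv 0 le_rfl
  · rw [norm_sub_rev] at hT
    have hpos : 0 < ‖u - v‖ := norm_pos_iff.mpr (sub_ne_zero.mpr hne)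
    exact smul_sub_mem_of_le hP_convex hP_smul huv
      (contractionFactor_mono hN hf_mono hf_range hpos hT) (hB_contr u v huv)

end ContractionFactor

theorem iterates_increasing_and_cauchy_general
    {E : Type*} [NormedAddCommGroup E] [NormedSpace ℝ E]
    (P : Set E)
    (hP_convex : Convex ℝ P)
    (hP_smul : ∀ x ∈ P, ∀ l : ℝ, 0 ≤ l → l • x ∈ P)
    (N : ℝ) (hN : 0 < N)
    (hP_normal : ∀ x y : E, x ∈ P → y - x ∈ P → ‖x‖ ≤ N * ‖y‖)
    (B : E → E)
    (hB_inc : ∀ u v : E, v - u ∈ P → B v - B u ∈ P)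
    (f : ℝ → ℝ)
    (hf_mono : ∀ s t : ℝ, 0 < s → s ≤ t → f s ≤ f t)
    (hf_range : ∀ t : ℝ, 0 < t → 0 < f t ∧ f t < 1)
    (hB_contr : ∀ u v : E, v - u ∈ P →
      (f (N * f ‖u - v‖ * ‖u - v‖) * f ‖u - v‖) • (v - u) - (B v - B u) ∈ P)
    (x₀ : E) (hx₀ : B x₀ - x₀ ∈ P) :
    (∀ n : ℕ, B^[n + 1] x₀ - B^[n] x₀ ∈ P) ∧
    CauchySeq (fun n => B^[n] x₀) := by
  have hd := iterate_succ_sub_mem hB_inc hx₀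
  refine ⟨hd, ?_⟩
  rcases eq_or_ne (B x₀) x₀ with hfix | hmove
  · simpa [Function.iterate_fixed hfix] using cauchySeq_const x₀
  set T := N * ‖B x₀ - x₀‖
  have hT : 0 < T := mul_pos hN (norm_pos_iff.mpr (sub_ne_zero.mpr hmove))
  obtain ⟨hc₀, hc₁⟩ := contractionFactor_pos_lt_one hN hf_range hT
  set c := f (N * f T * T) * f T
  have hle : ∀ n, c ^ n • (B x₀ - x₀) - (B^[n + 1] x₀ - B^[n] x₀) ∈ P := by
    refine pow_smul_sub_mem_of_step (d := fun n => B^[n + 1] x₀ - B^[n] x₀) hP_convex hP_smul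
      hc₀.le hx₀ fun n ih => ?_
    have hnorm : ‖B^[n + 1] x₀ - B^[n] x₀‖ ≤ T :=
      calc ‖B^[n + 1] x₀ - B^[n] x₀‖ ≤ T * c ^ n :=
            norm_le_of_pow_smul_sub_mem hP_normal hc₀.le (hd n) ih
        _ ≤ T := mul_le_of_le_one_right (by positivity) (pow_le_one₀ hc₀.le hc₁.le)
    simpa only [Function.iterate_succ_apply'] using
      smul_sub_map_sub_mem hP_convex hP_smul hN hf_mono hf_range hB_contr (hd n) hnorm
  exact cauchySeq_of_pow_smul_sub_mem hP_normal hc₀.le hc₁ hd (by simpa using hle)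

/-- If `P` is a normal cone with normal constant `N` in a real Banach space `E`
(order `u ≤ v ↔ v - u ∈ P`), `B : E → E` is increasing and satisfies
`Bv - Bu ≤ f(N·f(‖u-v‖)·‖u-v‖)·f(‖u-v‖) • (v - u)` whenever `u ≤ v` for some
increasing `f : (0,∞) → (0,1)`, and `x₀ ≤ B x₀`, then the iterative sequence
`xₙ = Bⁿ x₀` is increasing and Cauchy. -/
theorem iterates_increasing_and_cauchy
    {E : Type*} [NormedAddCommGroup E] [NormedSpace ℝ E] [CompleteSpace E]
    (P : Set E) (hP_nonempty : P.Nonempty) (hP_closed : IsClosed P)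
    (hP_convex : Convex ℝ P)
    (hP_smul : ∀ x ∈ P, ∀ l : ℝ, 0 ≤ l → l • x ∈ P)
    (hP_pointed : ∀ x : E, x ∈ P → -x ∈ P → x = 0)
    (N : ℝ) (hN : 0 < N)
    (hP_normal : ∀ x y : E, x ∈ P → y - x ∈ P → ‖x‖ ≤ N * ‖y‖)
    (B : E → E)
    (hB_inc : ∀ u v : E, v - u ∈ P → B v - B u ∈ P)
    (f : ℝ → ℝ)
    (hf_mono : ∀ s t : ℝ, 0 < s → s ≤ t → f s ≤ f t)
    (hf_range : ∀ t : ℝ, 0 < t → 0 < f t ∧ f t < 1)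
    (hB_contr : ∀ u v : E, v - u ∈ P →
      (f (N * f ‖u - v‖ * ‖u - v‖) * f ‖u - v‖) • (v - u) - (B v - B u) ∈ P)
    (x₀ : E) (hx₀ : B x₀ - x₀ ∈ P) :
    (∀ n : ℕ, B^[n + 1] x₀ - B^[n] x₀ ∈ P) ∧
    CauchySeq (fun n => B^[n] x₀) :=
  iterates_increasing_and_cauchy_general P hP_convex hP_smul N hN hP_normal B hB_inc f hf_mono
    hf_range hB_contr x₀ hx₀
end

section
/- Let E be a real Banach space, P ⊆ E a normal cone with normal constant N, and ≤ the induced partial order. Suppose B : E → E is an increasing operator and there exists an increasing function f : (0, ∞) → (0, 1) such that Bv − Bu ≤ f(N·f(‖u − v‖)·‖u − v‖)·f(‖u − v‖)·(v − u) for all u, v ∈ E with u ≤ v, and suppose there exists x₀ ∈ E with x₀ ≤ Bx₀. Then the iterative sequence xₙ₊₁ = Bxₙ converges in norm to some x* ∈ E which is a fixed point of B, i.e., Bx* = x*. -/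
open Filter Topology

/-- If `P` is a normal cone with normal constant `N` in a real Banach space `E`
(order `u ≤ v ↔ v - u ∈ P`), `B : E → E` is increasing and satisfies
`Bv - Bu ≤ f(N·f(‖u-v‖)·‖u-v‖)·f(‖u-v‖) • (v - u)` whenever `u ≤ v` for some
increasing `f : (0,∞) → (0,1)`, and `x₀ ≤ B x₀`, then the iterates `Bⁿ x₀`
converge in norm to a fixed point of `B`. -/
theorem iterates_converge_to_fixed_point
    {E : Type*} [NormedAddCommGroup E] [NormedSpace ℝ E] [CompleteSpace E]
    (P : Set E) (hP_nonempty : P.Nonempty) (hP_closed : IsClosed P)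
    (hP_convex : Convex ℝ P)
    (hP_smul : ∀ x ∈ P, ∀ l : ℝ, 0 ≤ l → l • x ∈ P)
    (hP_pointed : ∀ x : E, x ∈ P → -x ∈ P → x = 0)
    (N : ℝ) (hN : 0 < N)
    (hP_normal : ∀ x y : E, x ∈ P → y - x ∈ P → ‖x‖ ≤ N * ‖y‖)
    (B : E → E)
    (hB_inc : ∀ u v : E, v - u ∈ P → B v - B u ∈ P)
    (f : ℝ → ℝ)
    (hf_mono : ∀ s t : ℝ, 0 < s → s ≤ t → f s ≤ f t)
    (hf_range : ∀ t : ℝ, 0 < t → 0 < f t ∧ f t < 1)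
    (hB_contr : ∀ u v : E, v - u ∈ P →
      (f (N * f ‖u - v‖ * ‖u - v‖) * f ‖u - v‖) • (v - u) - (B v - B u) ∈ P)
    (x₀ : E) (hx₀ : B x₀ - x₀ ∈ P) :
    ∃ xstar : E, Tendsto (fun n => B^[n] x₀) atTop (𝓝 xstar) ∧ B xstar = xstar := by
  classical
  set x : ℕ → E := fun n => B^[n] x₀ with hxdef
  have hxsucc : ∀ n, x (n + 1) = B (x n) := fun n => Function.iterate_succ_apply' B n x₀
  set d : ℕ → E := fun n => x (n + 1) - x n with hddef
  -- basic cone facts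
  have hP_zero : (0 : E) ∈ P := by
    obtain ⟨p, hp⟩ := hP_nonempty
    simpa using hP_smul p hp 0 le_rfl
  have hP_add : ∀ a ∈ P, ∀ b ∈ P, a + b ∈ P := by
    intro a ha b hb
    have h2 := hP_convex ha hb (by norm_num : (0:ℝ) ≤ 1/2) (by norm_num : (0:ℝ) ≤ 1/2)
      (by norm_num : (1/2 : ℝ) + 1/2 = 1)
    have h3 := hP_smul _ h2 2 (by norm_num)
    have : (2:ℝ) • ((1/2 : ℝ) • a + (1/2 : ℝ) • b) = a + b := by
      rw [smul_add, smul_smul, smul_smul]; norm_num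
    rwa [this] at h3
  have hP_trans : ∀ X Y Z : E, X - Y ∈ P → Y - Z ∈ P → X - Z ∈ P := by
    intro X Y Z h1 h2
    have := hP_add _ h1 _ h2
    rwa [sub_add_sub_cancel] at this
  have hP_ssub : ∀ (a : ℝ) (A C : E), 0 ≤ a → A - C ∈ P → a • A - a • C ∈ P := by
    intro a A C ha h
    have := hP_smul _ h a ha
    rwa [smul_sub] at this
  -- differences are in the cone
  have hd : ∀ n, d n ∈ P := by
    intro n
    induction n with
    | zero => simpa [hddef, hxdef] using hx₀
    | succ k ih =>
      have : d (k+1) = B (x (k+1)) - B (x k) := by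
        simp only [hddef]; rw [hxsucc (k+1), hxsucc k]
      rw [this]
      exact hB_inc _ _ ih
  -- the contraction step for consecutive iterates
  set c : ℕ → ℝ := fun k => f (N * f ‖d k‖ * ‖d k‖) * f ‖d k‖ with hcdef
  have hstep : ∀ n, c n • d n - d (n + 1) ∈ P := by
    intro n
    have h := hB_contr (x n) (x (n + 1)) (hd n)
    have e1 : ‖x n - x (n+1)‖ = ‖d n‖ := by rw [norm_sub_rev]
    have e2 : B (x (n+1)) - B (x n) = d (n+1) := by
      simp only [hddef]; rw [hxsucc (n+1), hxsucc n]
    rw [e1, e2] at h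
    exact h
  by_cases hex : ∃ n, d n = 0
  · -- eventually constant case
    obtain ⟨n, hn⟩ := hex
    have hfix : x (n + 1) = x n := by
      have : x (n+1) - x n = 0 := hn
      exact sub_eq_zero.mp this
    have hconst : ∀ m, x (n + m) = x n := by
      intro m
      induction m with
      | zero => rfl
      | succ k ih =>
        have : x (n + (k+1)) = B (x (n + k)) := hxsucc (n + k)
        rw [this, ih, ← hxsucc n, hfix]
    refine ⟨x n, ?_, ?_⟩
    · apply tendsto_atTop_of_eventually_const (i₀ := n)
      intro m hm
      have : x m = x (n + (m - n)) := by rw [Nat.add_sub_cancel' hm]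
      rw [this, hconst]
    · rw [← hxsucc n, hfix]
  · push_neg at hex
    have htpos : ∀ n, 0 < ‖d n‖ := fun n => norm_pos_iff.mpr (hex n)
    have hc01 : ∀ k, 0 < c k ∧ c k < 1 := by
      intro k
      have h1 := hf_range ‖d k‖ (htpos k)
      have hs : 0 < N * f ‖d k‖ * ‖d k‖ := mul_pos (mul_pos hN h1.1) (htpos k)
      have h2 := hf_range _ hs
      have hck : c k = f (N * f ‖d k‖ * ‖d k‖) * f ‖d k‖ := rfl
      constructor
      · rw [hck]; exact mul_pos h2.1 h1.1
      · rw [hck]; nlinarith [h1.1, h1.2, h2.1, h2.2]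
    -- order-product bound
    have hprod : ∀ n, (∏ k ∈ Finset.range (n + 1), c k) • d 0 - d (n + 1) ∈ P := by
      intro n
      induction n with
      | zero => simpa [Finset.prod_range_one] using hstep 0
      | succ m ih =>
        have h1 := hstep (m + 1)
        have hcm : (0:ℝ) ≤ c (m + 1) := (hc01 (m+1)).1.le
        have h2 := hP_ssub (c (m+1)) _ _ hcm ih
        have h3 : c (m+1) • ((∏ k ∈ Finset.range (m+1), c k) • d 0) - d (m + 2) ∈ P :=
          hP_trans _ _ _ h2 h1
        have e : c (m+1) • ((∏ k ∈ Finset.range (m+1), c k) • d 0)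
            = (∏ k ∈ Finset.range (m+2), c k) • d 0 := by
          conv_rhs => rw [Finset.prod_range_succ]
          rw [smul_smul, mul_comm (c (m+1)) (∏ k ∈ Finset.range (m+1), c k)]
        rwa [e] at h3
    have htbound : ∀ n, ‖d (n+1)‖ ≤ N * ((∏ k ∈ Finset.range (n + 1), c k) * ‖d 0‖) := by
      intro n
      have hprodnn : (0:ℝ) ≤ ∏ k ∈ Finset.range (n+1), c k :=
        Finset.prod_nonneg fun k _ => (hc01 k).1.le
      have := hP_normal (d (n+1)) ((∏ k ∈ Finset.range (n + 1), c k) • d 0) (hd (n+1)) (hprod n)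
      rwa [norm_smul, Real.norm_eq_abs, abs_of_nonneg hprodnn] at this
    set T : ℝ := max ‖d 0‖ (N * ‖d 0‖) with hTdef
    have hTle : ∀ n, ‖d n‖ ≤ T := by
      intro n
      cases n with
      | zero => exact le_max_left _ _
      | succ m =>
        have hp1 : (∏ k ∈ Finset.range (m + 1), c k) ≤ 1 :=
          Finset.prod_le_one (fun k _ => (hc01 k).1.le) (fun k _ => (hc01 k).2.le)
        have := htbound m
        have h2 : N * ((∏ k ∈ Finset.range (m + 1), c k) * ‖d 0‖) ≤ N * ‖d 0‖ := by
          have : (∏ k ∈ Finset.range (m + 1), c k) * ‖d 0‖ ≤ 1 * ‖d 0‖ :=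
            mul_le_mul_of_nonneg_right hp1 (norm_nonneg _)
          nlinarith [hN]
        exact le_trans this (le_trans h2 (le_max_right _ _))
    have hT0 : 0 < T := lt_of_lt_of_le (htpos 0) (le_max_left _ _)
    set q : ℝ := f T with hqdef
    have hq := hf_range T hT0
    have hcq : ∀ k, c k ≤ q := by
      intro k
      have h1 := hf_range ‖d k‖ (htpos k)
      have hs : 0 < N * f ‖d k‖ * ‖d k‖ := mul_pos (mul_pos hN h1.1) (htpos k)
      have h2 := hf_range _ hs
      have h3 : f ‖d k‖ ≤ q := hf_mono _ _ (htpos k) (hTle k)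
      calc c k = f (N * f ‖d k‖ * ‖d k‖) * f ‖d k‖ := rfl
        _ ≤ 1 * f ‖d k‖ := mul_le_mul_of_nonneg_right h2.2.le h1.1.le
        _ = f ‖d k‖ := one_mul _
        _ ≤ q := h3
    have hqnn : (0:ℝ) ≤ q := hq.1.le
    have hprodq : ∀ n, (∏ k ∈ Finset.range (n + 1), c k) ≤ q ^ (n + 1) := by
      intro n
      induction n with
      | zero => simpa [Finset.prod_range_one] using hcq 0
      | succ m ih =>
        rw [Finset.prod_range_succ, pow_succ]
        have hcnn : (0:ℝ) ≤ c (m+1) := (hc01 (m+1)).1.le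
        have := mul_le_mul ih (hcq (m+1)) hcnn (pow_nonneg hqnn _)
        exact this
    have hgeo : ∀ n, ‖d n‖ ≤ T * q ^ n := by
      intro n
      cases n with
      | zero => simpa using hTle 0
      | succ m =>
        have h1 := htbound m
        have h2 : N * ((∏ k ∈ Finset.range (m + 1), c k) * ‖d 0‖) ≤ N * ‖d 0‖ * q ^ (m+1) := by
          calc N * ((∏ k ∈ Finset.range (m + 1), c k) * ‖d 0‖)
              ≤ N * (q ^ (m+1) * ‖d 0‖) := by
                apply mul_le_mul_of_nonneg_left _ hN.le
                exact mul_le_mul_of_nonneg_right (hprodq m) (norm_nonneg _)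
            _ = N * ‖d 0‖ * q ^ (m+1) := by ring
        have h3 : N * ‖d 0‖ * q ^ (m+1) ≤ T * q ^ (m+1) :=
          mul_le_mul_of_nonneg_right (le_max_right _ _) (pow_nonneg hqnn _)
        linarith
    have hcauchy : CauchySeq x := by
      apply cauchySeq_of_le_geometric q T hq.2
      intro n
      rw [dist_eq_norm, norm_sub_rev]
      exact hgeo n
    obtain ⟨xstar, hx⟩ := cauchySeq_tendsto_of_complete hcauchy
    -- order: x n ≤ x m for n ≤ m
    have hmle' : ∀ n k, x (n + k) - x n ∈ P := by
      intro n k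
      induction k with
      | zero => simpa using hP_zero
      | succ j ih =>
        have h1 : x (n + (j+1)) - x (n + j) ∈ P := hd (n + j)
        have := hP_add _ h1 _ ih
        rwa [sub_add_sub_cancel] at this
    have hmle : ∀ n m, n ≤ m → x m - x n ∈ P := by
      intro n m hnm
      obtain ⟨k, rfl⟩ := Nat.exists_eq_add_of_le hnm
      exact hmle' n k
    have hle : ∀ n, xstar - x n ∈ P := by
      intro n
      have ht : Tendsto (fun m => x m - x n) atTop (𝓝 (xstar - x n)) := hx.sub_const (x n)
      refine hP_closed.mem_of_tendsto ht ?_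
      filter_upwards [eventually_ge_atTop n] with m hm
      exact hmle n m hm
    have hne : ∀ n, x n ≠ xstar := by
      intro n h
      have h1 : xstar - x (n+1) ∈ P := hle (n+1)
      have h2 : x (n+1) - xstar ∈ P := by
        have hdn : d n = x (n+1) - x n := rfl
        have := hd n
        rw [hdn, h] at this
        exact this
      have h3 : x (n+1) - xstar = 0 := by
        apply hP_pointed _ h2
        rwa [neg_sub]
      apply hex n
      show x (n+1) - x n = 0
      rw [h, h3]
    have hrpos : ∀ n, 0 < ‖x n - xstar‖ := fun n => norm_pos_iff.mpr (sub_ne_zero.mpr (hne n))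
    have hfixb : ∀ n, ‖B xstar - x (n+1)‖ ≤ N * ‖xstar - x n‖ := by
      intro n
      have hcontr := hB_contr (x n) xstar (hle n)
      have hmem : B xstar - B (x n) ∈ P := hB_inc _ _ (hle n)
      rw [hxsucc n]
      set r : ℝ := ‖x n - xstar‖ with hrdef
      have h1 := hf_range r (hrpos n)
      have hs : 0 < N * f r * r := mul_pos (mul_pos hN h1.1) (hrpos n)
      have h2 := hf_range _ hs
      have hc' : 0 ≤ f (N * f r * r) * f r := (mul_pos h2.1 h1.1).le
      have hc'1 : f (N * f r * r) * f r ≤ 1 := by nlinarith [h1.1, h1.2, h2.1, h2.2]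
      have hnorm := hP_normal _ _ hmem hcontr
      rw [norm_smul, Real.norm_eq_abs, abs_of_nonneg hc'] at hnorm
      have e : ‖xstar - x n‖ = r := by rw [hrdef, norm_sub_rev]
      rw [e]
      calc ‖B xstar - B (x n)‖ ≤ N * ((f (N * f r * r) * f r) * ‖xstar - x n‖) := hnorm
        _ = N * ((f (N * f r * r) * f r) * r) := by rw [norm_sub_rev]
        _ ≤ N * (1 * r) := by
            apply mul_le_mul_of_nonneg_left _ hN.le
            exact mul_le_mul_of_nonneg_right hc'1 (hrpos n).le
        _ = N * r := by ring
    have hlim0 : Tendsto (fun n => ‖xstar - x n‖) atTop (𝓝 0) := by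
      have : Tendsto (fun n => xstar - x n) atTop (𝓝 (xstar - xstar)) :=
        tendsto_const_nhds.sub hx
      rw [sub_self] at this
      simpa using this.norm
    have hlimN : Tendsto (fun n => N * ‖xstar - x n‖) atTop (𝓝 0) := by
      have := hlim0.const_mul N
      simpa using this
    have hB0 : Tendsto (fun n => ‖B xstar - x (n+1)‖) atTop (𝓝 0) :=
      squeeze_zero (fun n => norm_nonneg _) hfixb hlimN
    have hBlim : Tendsto (fun n => x (n+1)) atTop (𝓝 (B xstar)) := by
      rw [tendsto_iff_norm_sub_tendsto_zero]
      simpa [norm_sub_rev] using hB0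
    have hxlim : Tendsto (fun n => x (n+1)) atTop (𝓝 xstar) :=
      hx.comp (tendsto_add_atTop_nat 1)
    exact ⟨xstar, hx, tendsto_nhds_unique hBlim hxlim⟩
end

section
/- Let E be a real Banach space, P ⊆ E a normal cone with normal constant N, and ≤ the induced partial order, and assume that for each x, y ∈ E both inf{x, y} and sup{x, y} exist in (E, ≤). Suppose B : E → E is an increasing operator and there exists an increasing function f : (0, ∞) → (0, 1) such that Bv − Bu ≤ f(N·f(‖u − v‖)·‖u − v‖)·f(‖u − v‖)·(v − u) for all u, v ∈ E with u ≤ v, and suppose there exists x₀ ∈ E with x₀ ≤ Bx₀. Then B has exactly one fixed point in E. -/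
open Filter Topology

/-- Chain/geometric-decay lemma: if `u`, `v` are two `B`-orbits with `u 0 ≤ v 0`
(and never equal), then `‖v n - u n‖` decays geometrically. -/
lemma aux_chain
    {E : Type*} [NormedAddCommGroup E] [NormedSpace ℝ E]
    (P : Set E) (hP_nonempty : P.Nonempty)
    (hP_convex : Convex ℝ P)
    (hP_smul : ∀ x ∈ P, ∀ l : ℝ, 0 ≤ l → l • x ∈ P)
    (N : ℝ) (hN : 0 < N)
    (hP_normal : ∀ x y : E, x ∈ P → y - x ∈ P → ‖x‖ ≤ N * ‖y‖)
    (B : E → E)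
    (hB_inc : ∀ u v : E, v - u ∈ P → B v - B u ∈ P)
    (f : ℝ → ℝ)
    (hf_mono : ∀ s t : ℝ, 0 < s → s ≤ t → f s ≤ f t)
    (hf_range : ∀ t : ℝ, 0 < t → 0 < f t ∧ f t < 1)
    (hB_contr : ∀ u v : E, v - u ∈ P →
      (f (N * f ‖u - v‖ * ‖u - v‖) * f ‖u - v‖) • (v - u) - (B v - B u) ∈ P)
    (u v : ℕ → E) (hu : ∀ n, u (n + 1) = B (u n)) (hv : ∀ n, v (n + 1) = B (v n))
    (h0 : v 0 - u 0 ∈ P) (hne : ∀ n, v n ≠ u n) :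
    ∃ c : ℝ, 0 ≤ c ∧ c < 1 ∧ ∀ n, ‖v n - u n‖ ≤ (N * ‖v 0 - u 0‖) * c ^ n := by
  obtain ⟨p, hp⟩ := hP_nonempty
  have hzero : (0 : E) ∈ P := by simpa using hP_smul p hp 0 le_rfl
  have hadd : ∀ a ∈ P, ∀ b ∈ P, a + b ∈ P := by
    intro a ha b hb
    have h1 : (1/2 : ℝ) • a + (1/2 : ℝ) • b ∈ P :=
      hP_convex ha hb (by norm_num) (by norm_num) (by norm_num)
    have h2 := hP_smul _ h1 2 (by norm_num)
    have heq : (2 : ℝ) • ((1/2 : ℝ) • a + (1/2 : ℝ) • b) = a + b := by module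
    rwa [heq] at h2
  have hord : ∀ n, v n - u n ∈ P := by
    intro n
    induction n with
    | zero => exact h0
    | succ n ih => rw [hu, hv]; exact hB_inc _ _ ih
  set d : ℕ → ℝ := fun n => ‖u n - v n‖ with hd_def
  have hd_pos : ∀ n, 0 < d n := by
    intro n
    simp only [hd_def]
    rw [norm_sub_pos_iff]
    exact (hne n).symm
  have hfd_pos : ∀ n, 0 < f (d n) := fun n => (hf_range _ (hd_pos n)).1
  have hfd_lt : ∀ n, f (d n) < 1 := fun n => (hf_range _ (hd_pos n)).2
  have harg_pos : ∀ n, 0 < N * f (d n) * d n :=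
    fun n => mul_pos (mul_pos hN (hfd_pos n)) (hd_pos n)
  set c : ℕ → ℝ := fun n => f (N * f (d n) * d n) * f (d n) with hc_def
  have hc_pos : ∀ n, 0 < c n := fun n =>
    mul_pos (hf_range _ (harg_pos n)).1 (hfd_pos n)
  have hc_lt1 : ∀ n, c n < 1 := by
    intro n
    show f (N * f (d n) * d n) * f (d n) < 1
    have h1 := (hf_range _ (harg_pos n)).1
    have h2 := (hf_range _ (harg_pos n)).2
    nlinarith [hfd_pos n, hfd_lt n]
  have hstep : ∀ n, c n • (v n - u n) - (v (n + 1) - u (n + 1)) ∈ P := by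
    intro n
    rw [hu, hv]
    exact hB_contr (u n) (v n) (hord n)
  set Pi : ℕ → ℝ := fun n => ∏ j ∈ Finset.range n, c j with hPi_def
  have hPi_nonneg : ∀ n, 0 ≤ Pi n := fun n =>
    Finset.prod_nonneg fun j _ => (hc_pos j).le
  have hPi_le_one : ∀ n, Pi n ≤ 1 := fun n =>
    Finset.prod_le_one (fun j _ => (hc_pos j).le) (fun j _ => (hc_lt1 j).le)
  have hchain : ∀ n, Pi n • (v 0 - u 0) - (v n - u n) ∈ P := by
    intro n
    induction n with
    | zero => simpa [hPi_def] using hzero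
    | succ n ih =>
      have h2 := hP_smul _ ih (c n) (hc_pos n).le
      have h1 := hstep n
      have h3 := hadd _ h2 _ h1
      have heq : c n • (Pi n • (v 0 - u 0) - (v n - u n)) +
          (c n • (v n - u n) - (v (n + 1) - u (n + 1)))
          = Pi (n + 1) • (v 0 - u 0) - (v (n + 1) - u (n + 1)) := by
        have : Pi (n + 1) = Pi n * c n := Finset.prod_range_succ c n
        rw [this]; module
      rwa [heq] at h3
  have hnorm : ∀ n, ‖v n - u n‖ ≤ N * (Pi n * ‖v 0 - u 0‖) := by
    intro n
    have := hP_normal (v n - u n) (Pi n • (v 0 - u 0)) (hord n) (hchain n)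
    rwa [norm_smul, Real.norm_of_nonneg (hPi_nonneg n)] at this
  set D : ℝ := N * ‖v 0 - u 0‖ with hD_def
  have hz_nonneg : (0 : ℝ) ≤ ‖v 0 - u 0‖ := norm_nonneg _
  have hd_le : ∀ n, d n ≤ D := by
    intro n
    have h1 : d n = ‖v n - u n‖ := norm_sub_rev _ _
    have h2 := hnorm n
    have h3 := hPi_le_one n
    have h4 := hPi_nonneg n
    rw [h1]
    show ‖v n - u n‖ ≤ N * ‖v 0 - u 0‖
    nlinarith [mul_le_mul_of_nonneg_left (mul_le_mul_of_nonneg_right h3 hz_nonneg) hN.le]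
  have hD_pos : 0 < D := lt_of_lt_of_le (hd_pos 0) (hd_le 0)
  have hfD_pos : 0 < f D := (hf_range _ hD_pos).1
  have hfD_lt : f D < 1 := (hf_range _ hD_pos).2
  have hargD_pos : 0 < N * f D * D := mul_pos (mul_pos hN hfD_pos) hD_pos
  set cstar : ℝ := f (N * f D * D) * f D with hcstar_def
  have hcstar_pos : 0 < cstar := mul_pos (hf_range _ hargD_pos).1 hfD_pos
  have hcstar_lt1 : cstar < 1 := by
    show f (N * f D * D) * f D < 1
    have h1 := (hf_range _ hargD_pos).1
    have h2 := (hf_range _ hargD_pos).2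
    nlinarith
  have hc_le : ∀ n, c n ≤ cstar := by
    intro n
    have h1 : f (d n) ≤ f D := hf_mono _ _ (hd_pos n) (hd_le n)
    have h2 : N * f (d n) * d n ≤ N * f D * D :=
      mul_le_mul (mul_le_mul_of_nonneg_left h1 hN.le) (hd_le n) (hd_pos n).le
        (mul_nonneg hN.le hfD_pos.le)
    have h3 : f (N * f (d n) * d n) ≤ f (N * f D * D) :=
      hf_mono _ _ (harg_pos n) h2
    exact mul_le_mul h3 h1 (hfd_pos n).le (hf_range _ hargD_pos).1.le
  have hPi_le : ∀ n, Pi n ≤ cstar ^ n := by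
    intro n
    induction n with
    | zero => simp [hPi_def]
    | succ n ih =>
      have : Pi (n + 1) = Pi n * c n := Finset.prod_range_succ c n
      rw [this, pow_succ]
      exact mul_le_mul ih (hc_le n) (hc_pos n).le (pow_nonneg hcstar_pos.le n)
  refine ⟨cstar, hcstar_pos.le, hcstar_lt1, fun n => ?_⟩
  have h2 := hnorm n
  have h3 := hPi_le n
  have h4 := hPi_nonneg n
  nlinarith

/-- Convergence of iterates to a fixed point from above. -/
lemma aux_tendsto
    {E : Type*} [NormedAddCommGroup E] [NormedSpace ℝ E]
    (P : Set E) (hP_nonempty : P.Nonempty)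
    (hP_convex : Convex ℝ P)
    (hP_smul : ∀ x ∈ P, ∀ l : ℝ, 0 ≤ l → l • x ∈ P)
    (N : ℝ) (hN : 0 < N)
    (hP_normal : ∀ x y : E, x ∈ P → y - x ∈ P → ‖x‖ ≤ N * ‖y‖)
    (B : E → E)
    (hB_inc : ∀ u v : E, v - u ∈ P → B v - B u ∈ P)
    (f : ℝ → ℝ)
    (hf_mono : ∀ s t : ℝ, 0 < s → s ≤ t → f s ≤ f t)
    (hf_range : ∀ t : ℝ, 0 < t → 0 < f t ∧ f t < 1)
    (hB_contr : ∀ u v : E, v - u ∈ P →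
      (f (N * f ‖u - v‖ * ‖u - v‖) * f ‖u - v‖) • (v - u) - (B v - B u) ∈ P)
    (x w : E) (hx : B x = x) (hw : w - x ∈ P) :
    Tendsto (fun n => B^[n] w) atTop (𝓝 x) := by
  by_cases h : ∃ n, B^[n] w = x
  · obtain ⟨n, hn⟩ := h
    have hconst : ∀ k, B^[n + k] w = x := by
      intro k
      induction k with
      | zero => simpa using hn
      | succ k ih =>
        have : n + (k + 1) = (n + k) + 1 := by omega
        rw [this, Function.iterate_succ_apply', ih, hx]
    apply tendsto_atTop_of_eventually_const (i₀ := n)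
    intro m hm
    obtain ⟨k, rfl⟩ := Nat.exists_eq_add_of_le hm
    exact hconst k
  · push_neg at h
    obtain ⟨c, hc0, hc1, hb⟩ := aux_chain P hP_nonempty hP_convex hP_smul N hN
      hP_normal B hB_inc f hf_mono hf_range hB_contr
      (fun _ => x) (fun n => B^[n] w)
      (fun n => hx.symm) (fun n => Function.iterate_succ_apply' B n w)
      (by simpa using hw) h
    rw [tendsto_iff_norm_sub_tendsto_zero]
    have hlim : Tendsto (fun n : ℕ => (N * ‖B^[0] w - x‖) * c ^ n) atTop (𝓝 0) := by
      have := (tendsto_pow_atTop_nhds_zero_of_lt_one hc0 hc1).const_mul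
        (N * ‖B^[0] w - x‖)
      simpa using this
    exact squeeze_zero (fun n => norm_nonneg _) (fun n => hb n) hlim

/-- If `P` is a normal cone with normal constant `N` in a real Banach space `E`
(order `u ≤ v ↔ v - u ∈ P`) in which every pair of elements has an infimum and a
supremum, `B : E → E` is increasing and satisfies
`Bv - Bu ≤ f(N·f(‖u-v‖)·‖u-v‖)·f(‖u-v‖) • (v - u)` whenever `u ≤ v` for some
increasing `f : (0,∞) → (0,1)`, and `x₀ ≤ B x₀` for some `x₀`, then `B` has
exactly one fixed point in `E`. -/
theorem increasing_contraction_unique_fixed_point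
    {E : Type*} [NormedAddCommGroup E] [NormedSpace ℝ E] [CompleteSpace E]
    (P : Set E) (hP_nonempty : P.Nonempty) (hP_closed : IsClosed P)
    (hP_convex : Convex ℝ P)
    (hP_smul : ∀ x ∈ P, ∀ l : ℝ, 0 ≤ l → l • x ∈ P)
    (hP_pointed : ∀ x : E, x ∈ P → -x ∈ P → x = 0)
    (N : ℝ) (hN : 0 < N)
    (hP_normal : ∀ x y : E, x ∈ P → y - x ∈ P → ‖x‖ ≤ N * ‖y‖)
    (hinf : ∀ x y : E, ∃ w : E, x - w ∈ P ∧ y - w ∈ P ∧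
      ∀ z : E, x - z ∈ P → y - z ∈ P → w - z ∈ P)
    (hsup : ∀ x y : E, ∃ w : E, w - x ∈ P ∧ w - y ∈ P ∧
      ∀ z : E, z - x ∈ P → z - y ∈ P → z - w ∈ P)
    (B : E → E)
    (hB_inc : ∀ u v : E, v - u ∈ P → B v - B u ∈ P)
    (f : ℝ → ℝ)
    (hf_mono : ∀ s t : ℝ, 0 < s → s ≤ t → f s ≤ f t)
    (hf_range : ∀ t : ℝ, 0 < t → 0 < f t ∧ f t < 1)
    (hB_contr : ∀ u v : E, v - u ∈ P →
      (f (N * f ‖u - v‖ * ‖u - v‖) * f ‖u - v‖) • (v - u) - (B v - B u) ∈ P)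
    (x₀ : E) (hx₀ : B x₀ - x₀ ∈ P) :
    ∃! x : E, B x = x := by
  obtain ⟨p, hp⟩ := hP_nonempty
  have hzero : (0 : E) ∈ P := by simpa using hP_smul p hp 0 le_rfl
  have hadd : ∀ a ∈ P, ∀ b ∈ P, a + b ∈ P := by
    intro a ha b hb
    have h1 : (1/2 : ℝ) • a + (1/2 : ℝ) • b ∈ P :=
      hP_convex ha hb (by norm_num) (by norm_num) (by norm_num)
    have h2 := hP_smul _ h1 2 (by norm_num)
    have heq : (2 : ℝ) • ((1/2 : ℝ) • a + (1/2 : ℝ) • b) = a + b := by module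
    rwa [heq] at h2
  -- Existence
  have ex : ∃ a, B a = a := by
    set x : ℕ → E := fun n => B^[n] x₀ with hx_def
    have hxs : ∀ n, x (n + 1) = B (x n) := fun n => Function.iterate_succ_apply' B n x₀
    have hmono : ∀ n, x (n + 1) - x n ∈ P := by
      intro n
      induction n with
      | zero => simpa [hx_def] using hx₀
      | succ n ih =>
        have h := hB_inc (x n) (x (n + 1)) ih
        rw [← hxs n] at h
        rwa [← hxs (n + 1)] at h
    by_cases hE : ∃ n, x (n + 1) = x n
    · obtain ⟨n, hn⟩ := hE
      exact ⟨x n, by rw [← hxs n]; exact hn⟩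
    · push_neg at hE
      obtain ⟨c, hc0, hc1, hb⟩ := aux_chain P ⟨p, hp⟩ hP_convex hP_smul N hN
        hP_normal B hB_inc f hf_mono hf_range hB_contr
        x (fun n => x (n + 1)) hxs (fun n => hxs (n + 1)) (hmono 0) hE
      have hcauchy : CauchySeq x := by
        apply cauchySeq_of_le_geometric c (N * ‖x 1 - x 0‖) hc1
        intro n
        rw [dist_eq_norm, norm_sub_rev]
        exact hb n
      obtain ⟨a, ha_t⟩ := cauchySeq_tendsto_of_complete hcauchy
      have hord2 : ∀ n m, n ≤ m → x m - x n ∈ P := by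
        intro n m hnm
        induction m, hnm using Nat.le_induction with
        | base => simpa using hzero
        | succ m hnm ih =>
          have := hadd _ (hmono m) _ ih
          simpa [sub_add_sub_cancel] using this
      have hlim : ∀ n, a - x n ∈ P := by
        intro n
        refine hP_closed.mem_of_tendsto (ha_t.sub tendsto_const_nhds) ?_
        filter_upwards [eventually_ge_atTop n] with m hm
        exact hord2 n m hm
      by_cases h2 : ∃ n, a = x n
      · obtain ⟨n, hn⟩ := h2
        have hup : a - x (n + 1) ∈ P := hlim (n + 1)
        have hdn : x (n + 1) - a ∈ P := by rw [hn]; exact hmono n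
        have : x (n + 1) - a = 0 := hP_pointed _ hdn (by simpa [neg_sub] using hup)
        have hxe : x (n + 1) = a := sub_eq_zero.mp this
        exact ⟨a, by rw [hn, ← hxs n, hxe]; exact hn⟩
      · push_neg at h2
        have key : ∀ n, ‖B a - x (n + 1)‖ ≤ N * ‖x n - a‖ := by
          intro n
          have hδ : 0 < ‖x n - a‖ :=
            norm_sub_pos_iff.mpr fun h => (h2 n) h.symm
          have hfa := hf_range _ hδ
          have hfb := hf_range _ (mul_pos (mul_pos hN hfa.1) hδ)
          have hcon := hB_contr (x n) a (hlim n)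
          have hmem : B a - B (x n) ∈ P := hB_inc _ _ (hlim n)
          have hnrm := hP_normal _ _ hmem hcon
          rw [norm_smul, Real.norm_of_nonneg (mul_pos hfb.1 hfa.1).le,
            norm_sub_rev a (x n)] at hnrm
          rw [hxs n]
          calc ‖B a - B (x n)‖ ≤ N * (f (N * f ‖x n - a‖ * ‖x n - a‖) *
                f ‖x n - a‖ * ‖x n - a‖) := hnrm
            _ ≤ N * ‖x n - a‖ := by
                have hc1 : f (N * f ‖x n - a‖ * ‖x n - a‖) * f ‖x n - a‖ ≤ 1 := by
                  nlinarith [hfa.1, hfa.2, hfb.1, hfb.2]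
                have hle : f (N * f ‖x n - a‖ * ‖x n - a‖) * f ‖x n - a‖ *
                    ‖x n - a‖ ≤ ‖x n - a‖ := by
                  nlinarith [mul_le_mul_of_nonneg_right hc1 hδ.le]
                exact mul_le_mul_of_nonneg_left hle hN.le
        have h3 : Tendsto (fun n => ‖x n - a‖) atTop (𝓝 (0 : ℝ)) :=
          tendsto_iff_norm_sub_tendsto_zero.mp ha_t
        have h4 : Tendsto (fun n => x (n + 1)) atTop (𝓝 (B a)) := by
          rw [tendsto_iff_norm_sub_tendsto_zero]
          have hlim2 : Tendsto (fun n => N * ‖x n - a‖) atTop (𝓝 0) := by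
            simpa using h3.const_mul N
          refine squeeze_zero (fun n => norm_nonneg _) (fun n => ?_) hlim2
          rw [norm_sub_rev]
          exact key n
        have h5 : Tendsto (fun n => x (n + 1)) atTop (𝓝 a) :=
          ha_t.comp (tendsto_add_atTop_nat 1)
        exact ⟨a, tendsto_nhds_unique h4 h5⟩
  obtain ⟨a, ha⟩ := ex
  refine ⟨a, ha, ?_⟩
  intro y hy
  obtain ⟨w, hw1, hw2, -⟩ := hsup y a
  have t1 := aux_tendsto P ⟨p, hp⟩ hP_convex hP_smul N hN hP_normal B hB_inc
    f hf_mono hf_range hB_contr y w hy hw1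
  have t2 := aux_tendsto P ⟨p, hp⟩ hP_convex hP_smul N hN hP_normal B hB_inc
    f hf_mono hf_range hB_contr a w ha hw2
  exact tendsto_nhds_unique t1 t2
end

section
/- Let F : [0,1] × ℝ → ℝ be continuous, λ > 0, and 0 < α ≤ λ, and suppose that for all t ∈ [0,1] and all x, y ∈ ℝ with y < x one has 0 ≤ F(t, y) + λy − (F(t, x) + λx) ≤ α·(x − y)·(x − y)·ln(1 + 1/(x − y)). Define (Tu)(t) = ∫₀¹ G(t, s)·[F(s, u(s)) + λu(s)] ds for u ∈ C[0,1], where G(t, s) = e^{λ(1+s−t)}/(e^λ − 1) for 0 ≤ s < t ≤ 1 and G(t, s) = e^{λ(s−t)}/(e^λ − 1) for 0 ≤ t ≤ s ≤ 1. Then for all u, v ∈ C[0,1] with v ≤ u pointwise and u ≠ v, ‖Tu − Tv‖ ≤ (α/λ)·f(‖u − v‖)·‖u − v‖ ≤ f(‖u − v‖)·‖u − v‖, where f(t) = t·ln(1 + 1/t) and ‖·‖ is the supremum norm. -/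
/-!
`T u - T v` is the integral of the Green function against
`(F(s, v) + λv) - (F(s, u) + λu)`. The Green function is nonnegative with total mass `1/λ`
in `s`, and the hypothesis on `F` puts the integrand in `[0, α‖u - v‖ f(‖u - v‖)]`, since
`x ↦ x f(x)` is increasing. Hence `‖Tu - Tv‖ ≤ (α/λ) f(‖u - v‖) ‖u - v‖`, and `α ≤ λ` gives the
second inequality.
-/

open MeasureTheory Set Real

/-- The Green function of the first-order periodic problem. -/
noncomputable def greenG (lam t s : ℝ) : ℝ :=
  if s < t then Real.exp (lam * (1 + s - t)) / (Real.exp lam - 1)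
  else Real.exp (lam * (s - t)) / (Real.exp lam - 1)

/-- The integral operator associated with the periodic problem. -/
noncomputable def periodicT (lam : ℝ) (F : ℝ → ℝ → ℝ) (u : ℝ → ℝ) (t : ℝ) : ℝ :=
  ∫ s in (0:ℝ)..1, greenG lam t s * (F s (u s) + lam * u s)

/-- The function `f(t) = t·ln(1 + 1/t)`. -/
noncomputable def fGer (t : ℝ) : ℝ := t * Real.log (1 + 1 / t)

lemma fGer_nonneg {x : ℝ} (hx : 0 ≤ x) : 0 ≤ fGer x :=
  mul_nonneg hx (log_nonneg (le_add_of_nonneg_right (one_div_nonneg.2 hx)))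

lemma fGer_monotoneOn : MonotoneOn fGer (Ici 0) := by
  intro x hx y hy hxy
  rcases (mem_Ici.1 hx).eq_or_lt with rfl | hx0
  · simpa [fGer] using fGer_nonneg hy
  have hy0 : 0 < y := hx0.trans_le hxy
  -- `fGer x = log (1 + a) / a` with `a = 1/x`: a chord slope of the concave `log` from `1`
  have hconc := strictConcaveOn_log_Ioi.concaveOn.2 (mem_Ioi.2 one_pos)
    (mem_Ioi.2 (by positivity : (0:ℝ) < 1 + 1 / x))
    (sub_nonneg.2 ((div_le_one hy0).2 hxy)) (div_nonneg hx0.le hy0.le) (sub_add_cancel 1 (x / y))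
  have hpt : (1 - x / y) • (1:ℝ) + (x / y) • (1 + 1 / x) = 1 + 1 / y := by
    simp only [smul_eq_mul]; field_simp; ring
  rw [hpt, smul_eq_mul, smul_eq_mul, log_one, mul_zero, zero_add] at hconc
  calc fGer x = y * (x / y * log (1 + 1 / x)) := by unfold fGer; field_simp
    _ ≤ y * log (1 + 1 / y) := mul_le_mul_of_nonneg_left hconc hy0.le

lemma sub_mem_Icc_of_fGer_bound {Φ : ℝ → ℝ} {α x y M : ℝ} (hα : 0 ≤ α)
    (hΦ : ∀ x y : ℝ, y < x → 0 ≤ Φ y - Φ x ∧ Φ y - Φ x ≤ α * (x - y) * fGer (x - y))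
    (hyx : y ≤ x) (hM : x - y ≤ M) :
    Φ y - Φ x ∈ Icc 0 (α * (M * fGer M)) := by
  have hxy0 : 0 ≤ x - y := sub_nonneg.2 hyx
  have hfM : (x - y) * fGer (x - y) ≤ M * fGer M :=
    mul_le_mul hM (fGer_monotoneOn hxy0 (hxy0.trans hM) hM) (fGer_nonneg hxy0) (hxy0.trans hM)
  rcases hyx.eq_or_lt with rfl | hlt
  · rw [sub_self]
    exact ⟨le_rfl, mul_nonneg hα ((mul_nonneg hxy0 (fGer_nonneg hxy0)).trans hfM)⟩
  · obtain ⟨h0, hle⟩ := hΦ x y hlt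
    exact ⟨h0, hle.trans (by rw [mul_assoc]; exact mul_le_mul_of_nonneg_left hfM hα)⟩

lemma bddAbove_range_abs_Icc {a b : ℝ} {w : ℝ → ℝ} (hw : ContinuousOn w (Icc a b)) :
    BddAbove (range fun t : Icc a b => |w t|) := by
  simpa only [image_eq_range] using isCompact_Icc.bddAbove_image hw.abs

lemma continuousOn_apply_add_mul {S : Set ℝ} {F : ℝ → ℝ → ℝ}
    (hF : ContinuousOn (fun p : ℝ × ℝ => F p.1 p.2) (S ×ˢ univ)) {w : ℝ → ℝ}
    (hw : ContinuousOn w S) (lam : ℝ) :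
    ContinuousOn (fun s => F s (w s) + lam * w s) S :=
  (hF.comp (continuousOn_id.prodMk hw) fun _ hs => ⟨hs, mem_univ _⟩).add
    (continuousOn_const.mul hw)

section Green

variable {lam : ℝ}

lemma greenG_nonneg (hlam : 0 < lam) (t s : ℝ) : 0 ≤ greenG lam t s := by
  have : 0 < exp lam - 1 := sub_pos.2 (one_lt_exp_iff.2 hlam)
  unfold greenG; split_ifs <;> positivity

lemma greenG_eqOn_left {t : ℝ} (ht : 0 ≤ t) :
    EqOn (fun s => exp (lam * s + lam * (1 - t)) / (exp lam - 1)) (greenG lam t) (uIoo 0 t) := by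
  intro s hs
  rw [uIoo_of_le ht] at hs
  simp only [greenG, if_pos hs.2]
  congr 2; ring

lemma greenG_eqOn_right {t : ℝ} (ht : t ≤ 1) :
    EqOn (fun s => exp (lam * s + lam * -t) / (exp lam - 1)) (greenG lam t) (uIoo t 1) := by
  intro s hs
  rw [uIoo_of_le ht] at hs
  simp only [greenG, if_neg hs.1.not_gt]
  congr 2; ring

lemma intervalIntegrable_greenG {t : ℝ} (ht : t ∈ Icc (0:ℝ) 1) :
    IntervalIntegrable (greenG lam t) volume 0 1 :=
  ((Continuous.intervalIntegrable (by fun_prop) 0 t).congr_uIoo (greenG_eqOn_left ht.1)).trans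
    ((Continuous.intervalIntegrable (by fun_prop) t 1).congr_uIoo (greenG_eqOn_right ht.2))

lemma integral_exp_mul_add_div {c : ℝ} (hc : c ≠ 0) (d r a b : ℝ) :
    ∫ s in a..b, exp (c * s + d) / r = (exp (c * b + d) - exp (c * a + d)) / (c * r) := by
  rw [intervalIntegral.integral_div, intervalIntegral.integral_comp_mul_add (fun s => exp s) hc,
    integral_exp, smul_eq_mul]
  field_simp

lemma integral_greenG (hlam : 0 < lam) {t : ℝ} (ht : t ∈ Icc (0:ℝ) 1) :
    ∫ s in (0:ℝ)..1, greenG lam t s = 1 / lam := by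
  have hE : exp lam - 1 ≠ 0 := (sub_pos.2 (one_lt_exp_iff.2 hlam)).ne'
  have hleft := greenG_eqOn_left (lam := lam) ht.1
  have hright := greenG_eqOn_right (lam := lam) ht.2
  rw [← intervalIntegral.integral_add_adjacent_intervals
      ((Continuous.intervalIntegrable (by fun_prop) 0 t).congr_uIoo hleft)
      ((Continuous.intervalIntegrable (by fun_prop) t 1).congr_uIoo hright),
    ← intervalIntegral.integral_congr_uIoo hleft, ← intervalIntegral.integral_congr_uIoo hright,
    integral_exp_mul_add_div hlam.ne', integral_exp_mul_add_div hlam.ne']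
  have h1 : lam * t + lam * (1 - t) = lam := by ring
  have h2 : lam * 0 + lam * (1 - t) = lam * 1 + lam * -t := by ring
  have h3 : lam * t + lam * -t = 0 := by ring
  rw [h1, h2, h3, exp_zero]
  field_simp
  ring

lemma abs_integral_greenG_mul_le (hlam : 0 < lam) {t : ℝ} (ht : t ∈ Icc (0:ℝ) 1)
    {w : ℝ → ℝ} {C : ℝ} (hw : ContinuousOn w (Icc 0 1)) (hwC : ∀ s ∈ Icc (0:ℝ) 1, w s ∈ Icc 0 C) :
    |∫ s in (0:ℝ)..1, greenG lam t s * w s| ≤ C / lam := by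
  have hG := intervalIntegrable_greenG (lam := lam) ht
  rw [abs_of_nonneg (intervalIntegral.integral_nonneg zero_le_one
    fun s hs => mul_nonneg (greenG_nonneg hlam t s) (hwC s hs).1)]
  calc ∫ s in (0:ℝ)..1, greenG lam t s * w s
      ≤ ∫ s in (0:ℝ)..1, greenG lam t s * C :=
        intervalIntegral.integral_mono_on zero_le_one
          (hG.mul_continuousOn (by rwa [uIcc_of_le zero_le_one])) (hG.mul_const C)
          fun s hs => mul_le_mul_of_nonneg_left (hwC s hs).2 (greenG_nonneg hlam t s)
    _ = C / lam := by rw [intervalIntegral.integral_mul_const, integral_greenG hlam ht]; ring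

end Green

lemma periodicT_sub_periodicT {lam : ℝ} {F : ℝ → ℝ → ℝ}
    (hF : ContinuousOn (fun p : ℝ × ℝ => F p.1 p.2) (Icc 0 1 ×ˢ univ)) {u v : ℝ → ℝ}
    (hu : ContinuousOn u (Icc 0 1)) (hv : ContinuousOn v (Icc 0 1)) {t : ℝ}
    (ht : t ∈ Icc (0:ℝ) 1) :
    periodicT lam F u t - periodicT lam F v t =
      ∫ s in (0:ℝ)..1, greenG lam t s * ((F s (u s) + lam * u s) - (F s (v s) + lam * v s)) := by
  have hint : ∀ w : ℝ → ℝ, ContinuousOn w (Icc 0 1) →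
      IntervalIntegrable (fun s => greenG lam t s * (F s (w s) + lam * w s)) volume 0 1 :=
    fun w hw => (intervalIntegrable_greenG ht).mul_continuousOn
      (by rw [uIcc_of_le zero_le_one]; exact continuousOn_apply_add_mul hF hw lam)
  simp only [periodicT, mul_sub]
  exact (intervalIntegral.integral_sub (hint u hu) (hint v hv)).symm

lemma abs_periodicT_sub_le {lam α : ℝ} {F : ℝ → ℝ → ℝ}
    (hF : ContinuousOn (fun p : ℝ × ℝ => F p.1 p.2) (Icc 0 1 ×ˢ univ))
    (hlam : 0 < lam) (hα : 0 ≤ α)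
    (hcontr : ∀ t ∈ Icc (0:ℝ) 1, ∀ x y : ℝ, y < x →
      0 ≤ F t y + lam * y - (F t x + lam * x) ∧
      F t y + lam * y - (F t x + lam * x) ≤ α * (x - y) * fGer (x - y))
    {u v : ℝ → ℝ} (hu : ContinuousOn u (Icc 0 1)) (hv : ContinuousOn v (Icc 0 1))
    (hle : ∀ t ∈ Icc (0:ℝ) 1, v t ≤ u t) {M : ℝ} (hM : ∀ s ∈ Icc (0:ℝ) 1, u s - v s ≤ M)
    {t : ℝ} (ht : t ∈ Icc (0:ℝ) 1) :
    |periodicT lam F u t - periodicT lam F v t| ≤ α * (M * fGer M) / lam := by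
  rw [abs_sub_comm, periodicT_sub_periodicT hF hv hu ht]
  exact abs_integral_greenG_mul_le hlam ht
    ((continuousOn_apply_add_mul hF hv lam).sub (continuousOn_apply_add_mul hF hu lam))
    fun s hs => sub_mem_Icc_of_fGer_bound hα (hcontr s hs) (hle s hs) (hM s hs)

theorem periodicT_norm_contraction_general
    (F : ℝ → ℝ → ℝ)
    (hF : ContinuousOn (fun p : ℝ × ℝ => F p.1 p.2) (Set.Icc 0 1 ×ˢ Set.univ))
    (lam α : ℝ) (hlam : 0 < lam) (hα : 0 < α) (hαlam : α ≤ lam)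
    (hcontr : ∀ t ∈ Set.Icc (0:ℝ) 1, ∀ x y : ℝ, y < x →
      0 ≤ F t y + lam * y - (F t x + lam * x) ∧
      F t y + lam * y - (F t x + lam * x) ≤ α * (x - y) * fGer (x - y))
    (u v : ℝ → ℝ)
    (hu : ContinuousOn u (Set.Icc 0 1)) (hv : ContinuousOn v (Set.Icc 0 1))
    (hle : ∀ t ∈ Set.Icc (0:ℝ) 1, v t ≤ u t) :
    (⨆ t : Set.Icc (0:ℝ) 1, |periodicT lam F u t - periodicT lam F v t|) ≤
      (α / lam) * fGer (⨆ t : Set.Icc (0:ℝ) 1, |u t - v t|) *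
        (⨆ t : Set.Icc (0:ℝ) 1, |u t - v t|) ∧
    (α / lam) * fGer (⨆ t : Set.Icc (0:ℝ) 1, |u t - v t|) *
        (⨆ t : Set.Icc (0:ℝ) 1, |u t - v t|) ≤
      fGer (⨆ t : Set.Icc (0:ℝ) 1, |u t - v t|) *
        (⨆ t : Set.Icc (0:ℝ) 1, |u t - v t|) := by
  have : Nonempty (Icc (0:ℝ) 1) := ⟨⟨0, left_mem_Icc.2 zero_le_one⟩⟩
  set M := ⨆ t : Icc (0:ℝ) 1, |u t - v t|
  have hbdd := bddAbove_range_abs_Icc (hu.sub hv)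
  have hM : ∀ s ∈ Icc (0:ℝ) 1, u s - v s ≤ M :=
    fun s hs => (le_abs_self _).trans (le_ciSup hbdd ⟨s, hs⟩)
  have hM0 : 0 ≤ M := (abs_nonneg _).trans (le_ciSup hbdd (Classical.arbitrary _))
  refine ⟨ciSup_le fun t => ?_, ?_⟩
  · calc _ ≤ α * (M * fGer M) / lam := abs_periodicT_sub_le hF hlam hα.le hcontr hu hv hle hM t.2
      _ = α / lam * fGer M * M := by ring
  · rw [mul_assoc]
    exact mul_le_of_le_one_left (mul_nonneg (fGer_nonneg hM0) hM0) ((div_le_one hlam).2 hαlam)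

/-- Under the contraction-type assumption
`0 ≤ F(t,y) + λy - (F(t,x) + λx) ≤ α(x - y)·(x - y)ln(1 + 1/(x - y))` for `y < x`,
with `0 < α ≤ λ`, the operator `T` satisfies
`‖Tu - Tv‖ ≤ (α/λ)·f(‖u - v‖)·‖u - v‖ ≤ f(‖u - v‖)·‖u - v‖`
for all continuous `u, v` on `[0,1]` with `v ≤ u` pointwise and `u ≠ v`,
where `f(t) = t·ln(1 + 1/t)` and `‖·‖` is the supremum norm over `[0,1]`. -/
theorem periodicT_norm_contraction
    (F : ℝ → ℝ → ℝ)
    (hF : ContinuousOn (fun p : ℝ × ℝ => F p.1 p.2) (Set.Icc 0 1 ×ˢ Set.univ))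
    (lam α : ℝ) (hlam : 0 < lam) (hα : 0 < α) (hαlam : α ≤ lam)
    (hcontr : ∀ t ∈ Set.Icc (0:ℝ) 1, ∀ x y : ℝ, y < x →
      0 ≤ F t y + lam * y - (F t x + lam * x) ∧
      F t y + lam * y - (F t x + lam * x) ≤ α * (x - y) * fGer (x - y))
    (u v : ℝ → ℝ)
    (hu : ContinuousOn u (Set.Icc 0 1)) (hv : ContinuousOn v (Set.Icc 0 1))
    (hle : ∀ t ∈ Set.Icc (0:ℝ) 1, v t ≤ u t)
    (hne : ∃ t ∈ Set.Icc (0:ℝ) 1, u t ≠ v t) :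
    (⨆ t : Set.Icc (0:ℝ) 1, |periodicT lam F u t - periodicT lam F v t|) ≤
      (α / lam) * fGer (⨆ t : Set.Icc (0:ℝ) 1, |u t - v t|) *
        (⨆ t : Set.Icc (0:ℝ) 1, |u t - v t|) ∧
    (α / lam) * fGer (⨆ t : Set.Icc (0:ℝ) 1, |u t - v t|) *
        (⨆ t : Set.Icc (0:ℝ) 1, |u t - v t|) ≤
      fGer (⨆ t : Set.Icc (0:ℝ) 1, |u t - v t|) *
        (⨆ t : Set.Icc (0:ℝ) 1, |u t - v t|) :=
  periodicT_norm_contraction_general F hF lam α hlam hα hαlam hcontr u v hu hv hle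
end

section
/- Let F : [0,1] × ℝ → ℝ be continuous and λ > 0. Define (Tu)(t) = ∫₀¹ G(t, s)·[F(s, u(s)) + λu(s)] ds for u ∈ C[0,1], where G(t, s) = e^{λ(1+s−t)}/(e^λ − 1) for 0 ≤ s < t ≤ 1 and G(t, s) = e^{λ(s−t)}/(e^λ − 1) for 0 ≤ t ≤ s ≤ 1. Then a function u ∈ C[0,1] is a fixed point of T (Tu = u) if and only if u is continuously differentiable on [0,1] and solves the first-order periodic problem u′(t) = F(t, u(t)) for t ∈ [0,1] with u(0) = u(1). -/
/-!
Writing `G(t, s) = e^{-λt} e^{λs} (𝟙[s < t] + 1 / (e^λ - 1))` turns `T u` into the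
variation-of-constants formula `w(t) = e^{-λt} (∫₀ᵗ e^{λs} g + (∫₀¹ e^{λs} g) / (e^λ - 1))`
for `g = F(·, u) + λ u`, and `w` solves `w' = g - λ w` with `w(0) = w(1)`. Hence a fixed point
solves the periodic problem. Conversely, if `u` does, then `d = w - u` solves `d' = -λ d` with
`d(0) = d(1)`; since `e^{λt} d(t)` is constant and `e^λ ≠ 1`, this forces `d = 0`.
-/

open Set MeasureTheory Real

theorem intervalIntegral_indicator_Iio {E : Type*} [NormedAddCommGroup E] [NormedSpace ℝ E]
    {μ : Measure ℝ} [NullSingletonClass μ] {f : ℝ → E} {a t b : ℝ} (ht : t ∈ Icc a b) :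
    ∫ x in a..b, (Iio t).indicator f x ∂μ = ∫ x in a..t, f x ∂μ := by
  have hinter : Iio t ∩ Ioc a b = Ioo a t := by
    ext x
    simp only [mem_inter_iff, mem_Iio, mem_Ioc, mem_Ioo]
    exact ⟨fun ⟨hxt, hax, _⟩ => ⟨hax, hxt⟩, fun ⟨hax, hxt⟩ => ⟨hxt, hax, hxt.le.trans ht.2⟩⟩
  rw [intervalIntegral.integral_of_le ht.1, intervalIntegral.integral_of_le (ht.1.trans ht.2),
    integral_indicator measurableSet_Iio, Measure.restrict_restrict measurableSet_Iio, hinter, integral_Ioc_eq_integral_Ioo]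

theorem hasDerivWithinAt_integral_of_continuousOn {f : ℝ → ℝ} {a b t : ℝ}
    (hf : ContinuousOn f (Icc a b)) (ht : t ∈ Icc a b) :
    HasDerivWithinAt (fun u => ∫ x in a..u, f x) (f t) (Icc a b) t :=
  have : Fact (t ∈ Icc a b) := ⟨ht⟩
  intervalIntegral.integral_hasDerivWithinAt_right
    ((hf.mono (Icc_subset_Icc_right ht.2)).intervalIntegrable_of_Icc ht.1)
    (hf.stronglyMeasurableAtFilter_nhdsWithin measurableSet_Icc t) (hf t ht)

theorem greenG_mul_eq {lam : ℝ} (hlam : lam ≠ 0) (g : ℝ → ℝ) (t s : ℝ) :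
    greenG lam t s * g s = exp (-(lam * t)) *
      ((Iio t).indicator (fun s => exp (lam * s) * g s) s
        + exp (lam * s) * g s / (exp lam - 1)) := by
  have hD : exp lam - 1 ≠ 0 := sub_ne_zero.2 (by simpa using hlam)
  by_cases hst : s < t
  · simp only [greenG, hst, if_true, indicator_of_mem (mem_Iio.2 hst)]
    rw [show lam * (1 + s - t) = lam + -(lam * t) + lam * s by ring, exp_add, exp_add]
    field_simp
    ring
  · simp only [greenG, hst, if_false, indicator_of_notMem (show s ∉ Iio t from hst), zero_add]
    rw [show lam * (s - t) = -(lam * t) + lam * s by ring, exp_add]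
    ring

noncomputable def linearPeriodicSolution (lam : ℝ) (g : ℝ → ℝ) (t : ℝ) : ℝ :=
  exp (-(lam * t)) * ((∫ s in (0:ℝ)..t, exp (lam * s) * g s)
    + (∫ s in (0:ℝ)..1, exp (lam * s) * g s) / (exp lam - 1))

theorem integral_greenG_mul {lam : ℝ} (hlam : lam ≠ 0) {g : ℝ → ℝ}
    (hg : IntervalIntegrable g volume 0 1) {t : ℝ} (ht : t ∈ Icc (0:ℝ) 1) :
    ∫ s in (0:ℝ)..1, greenG lam t s * g s = linearPeriodicSolution lam g t := by
  have hφ : IntervalIntegrable (fun s => exp (lam * s) * g s) volume 0 1 :=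
    hg.continuousOn_mul (by fun_prop)
  simp_rw [greenG_mul_eq hlam]
  have hφIio : IntervalIntegrable ((Iio t).indicator fun s => exp (lam * s) * g s) volume 0 1 :=
    ⟨hφ.1.indicator measurableSet_Iio, hφ.2.indicator measurableSet_Iio⟩
  rw [intervalIntegral.integral_const_mul, intervalIntegral.integral_add hφIio (hφ.div_const _),
    intervalIntegral_indicator_Iio ht, intervalIntegral.integral_div]
  rfl

theorem hasDerivWithinAt_linearPeriodicSolution (lam : ℝ) {g : ℝ → ℝ}
    (hg : ContinuousOn g (Icc 0 1)) {t : ℝ} (ht : t ∈ Icc (0:ℝ) 1) :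
    HasDerivWithinAt (linearPeriodicSolution lam g)
      (g t - lam * linearPeriodicSolution lam g t) (Icc 0 1) t := by
  have hA := hasDerivWithinAt_integral_of_continuousOn
    (f := fun s => exp (lam * s) * g s) ((by fun_prop : Continuous _).continuousOn.mul hg) ht
  have hE : HasDerivAt (fun x => exp (-(lam * x))) (exp (-(lam * t)) * -lam) t := by
    simpa using ((hasDerivAt_id t).const_mul lam).neg.exp
  refine (hE.hasDerivWithinAt.mul (hA.add_const _)).congr_deriv ?_
  have hinv : exp (-(lam * t)) * exp (lam * t) = 1 := by rw [← exp_add]; simp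
  simp only [linearPeriodicSolution]
  linear_combination g t * hinv

theorem linearPeriodicSolution_one {lam : ℝ} (hlam : lam ≠ 0) (g : ℝ → ℝ) :
    linearPeriodicSolution lam g 1 = linearPeriodicSolution lam g 0 := by
  have hD : exp lam - 1 ≠ 0 := sub_ne_zero.2 (by simpa using hlam)
  simp only [linearPeriodicSolution, mul_one, mul_zero, neg_zero, exp_zero, one_mul,
    intervalIntegral.integral_same, zero_add, exp_neg]
  field_simp
  ring

theorem eqOn_zero_of_hasDerivWithinAt_neg_mul_self {lam a b : ℝ} (hlam : lam ≠ 0) (hab : a < b)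
    {d : ℝ → ℝ} (hd : ∀ t ∈ Icc a b, HasDerivWithinAt d (-lam * d t) (Icc a b) t)
    (hper : d a = d b) : EqOn d 0 (Icc a b) := by
  have hh : ∀ t ∈ Icc a b, HasDerivWithinAt (fun x => exp (lam * x) * d x) 0 (Icc a b) t := by
    intro t ht
    have hE : HasDerivAt (fun x => exp (lam * x)) (exp (lam * t) * lam) t := by
      simpa using ((hasDerivAt_id t).const_mul lam).exp
    exact (hE.hasDerivWithinAt.mul (hd t ht)).congr_deriv (by ring)
  have hconst := constant_of_has_deriv_right_zero
    (fun t ht => (hh t ht).continuousWithinAt)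
    fun t ht => (hh t (Ico_subset_Icc_self ht)).mono_of_mem_nhdsWithin (Icc_mem_nhdsGE_of_mem ht)
  have hda : d a = 0 := by
    have hb := hconst b (right_mem_Icc.2 hab.le)
    rw [← hper] at hb
    have : exp (lam * b) ≠ exp (lam * a) := by
      rw [Ne, exp_eq_exp, mul_right_inj' hlam]
      exact hab.ne'
    exact (mul_eq_mul_right_iff.1 hb).resolve_left this
  intro t ht
  simpa [hda, (exp_pos _).ne'] using hconst t ht

theorem linearPeriodicSolution_eq_iff {lam : ℝ} (hlam : lam ≠ 0) {g u : ℝ → ℝ}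
    (hg : ContinuousOn g (Icc 0 1)) :
    (∀ t ∈ Icc (0:ℝ) 1, linearPeriodicSolution lam g t = u t) ↔
      (∀ t ∈ Icc (0:ℝ) 1, HasDerivWithinAt u (g t - lam * u t) (Icc 0 1) t) ∧ u 0 = u 1 := by
  constructor
  · intro hwu
    refine ⟨fun t ht => ?_, ?_⟩
    · rw [← hwu t ht]
      exact (hasDerivWithinAt_linearPeriodicSolution lam hg ht).congr
        (fun x hx => (hwu x hx).symm) (hwu t ht).symm
    · rw [← hwu 0 (left_mem_Icc.2 zero_le_one), ← hwu 1 (right_mem_Icc.2 zero_le_one),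
        linearPeriodicSolution_one hlam]
  · rintro ⟨hu, hper⟩ t ht
    refine sub_eq_zero.1 (eqOn_zero_of_hasDerivWithinAt_neg_mul_self hlam zero_lt_one
      (d := fun x => linearPeriodicSolution lam g x - u x)
      (fun x hx => ((hasDerivWithinAt_linearPeriodicSolution lam hg hx).sub
        (hu x hx)).congr_deriv (by ring)) ?_ ht)
    rw [linearPeriodicSolution_one hlam, hper]

/-- For continuous `F` and `λ > 0`, a continuous function `u` on `[0,1]` is a
fixed point of the operator `T` if and only if `u` is (continuously)
differentiable on `[0,1]` with `u'(t) = F(t, u(t))` and `u(0) = u(1)`. -/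
theorem periodicT_fixed_point_iff_solution
    (F : ℝ → ℝ → ℝ)
    (hF : ContinuousOn (fun p : ℝ × ℝ => F p.1 p.2) (Set.Icc 0 1 ×ˢ Set.univ))
    (lam : ℝ) (hlam : 0 < lam)
    (u : ℝ → ℝ) (hu : ContinuousOn u (Set.Icc 0 1)) :
    (∀ t ∈ Set.Icc (0:ℝ) 1, periodicT lam F u t = u t) ↔
    ((∀ t ∈ Set.Icc (0:ℝ) 1, HasDerivWithinAt u (F t (u t)) (Set.Icc 0 1) t) ∧
      u 0 = u 1) := by
  set g : ℝ → ℝ := fun s => F s (u s) + lam * u s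
  have hg : ContinuousOn g (Icc 0 1) :=
    (hF.comp (continuousOn_id.prodMk hu) fun _ hs => ⟨hs, mem_univ _⟩).add
      (continuousOn_const.mul hu)
  have hT : ∀ t ∈ Icc (0:ℝ) 1, periodicT lam F u t = linearPeriodicSolution lam g t :=
    fun _ ht => integral_greenG_mul hlam.ne' (hg.intervalIntegrable_of_Icc zero_le_one) ht
  calc (∀ t ∈ Icc (0:ℝ) 1, periodicT lam F u t = u t)
      ↔ ∀ t ∈ Icc (0:ℝ) 1, linearPeriodicSolution lam g t = u t :=
        forall₂_congr fun t ht => by rw [hT t ht]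
    _ ↔ _ := by simpa only [g, add_sub_cancel_right] using
      linearPeriodicSolution_eq_iff (u := u) hlam.ne' hg
end
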